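/- arXiv:2006.14716 — 9 statements merged into one kernel-verified Lean document; each statement's English description precedes it below -/
import Mathlib

section
/- Let k ≥ 2 divide q-1 and χ_k be a character of F_q* of order k. Then Σ_{s,t=1}^{k-1} J(χ_k^s, χ_k^t)·J(χ̄_k^s, χ̄_k^t) = (k-1)((k-2)q + 1). -/
theorem sum_jacobiSum_mul_conj {F : Type*} [Field F] [Fintype F]
    (k : ℕ) (hk : 2 ≤ k) (hdvd : k ∣ Fintype.card F - 1)
    (χ : MulChar F ℂ) (hord : orderOf χ = k) :
    ∑ s ∈ Finset.Icc 1 (k - 1), ∑ t ∈ Finset.Icc 1 (k - 1),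
        jacobiSum (χ ^ s) (χ ^ t) * jacobiSum ((χ ^ s)⁻¹) ((χ ^ t)⁻¹)
      = ((k : ℂ) - 1) * (((k : ℂ) - 2) * (Fintype.card F : ℂ) + 1) := by
  have hchar : ringChar ℂ ≠ ringChar F := by
    rw [ringChar.eq_zero]
    exact ((CharP.char_is_prime F (ringChar F)).ne_zero).symm
  have hne : ∀ s ∈ Finset.Icc 1 (k - 1), χ ^ s ≠ 1 := by
    intro s hs
    rw [Finset.mem_Icc] at hs
    exact pow_ne_one_of_lt_orderOf (by omega) (by omega)
  have key : ∀ s ∈ Finset.Icc 1 (k - 1), ∀ t ∈ Finset.Icc 1 (k - 1),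
      jacobiSum (χ ^ s) (χ ^ t) * jacobiSum ((χ ^ s)⁻¹) ((χ ^ t)⁻¹)
        = if t = k - s then 1 else (Fintype.card F : ℂ) := by
    intro s hs t ht
    have hs' := Finset.mem_Icc.mp hs
    have ht' := Finset.mem_Icc.mp ht
    by_cases h : t = k - s
    · have hst : χ ^ s * χ ^ t = 1 := by
        have hstk : s + t = k := by omega
        rw [← pow_add, hstk, ← hord, pow_orderOf_eq_one]
      have htinv : χ ^ t = (χ ^ s)⁻¹ := eq_inv_of_mul_eq_one_right
        (by rw [← hst])
      rw [if_pos h, htinv, jacobiSum_nontrivial_inv (hne s hs), inv_inv,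
        jacobiSum_comm, jacobiSum_nontrivial_inv (hne s hs), neg_mul_neg,
        ← MulChar.mul_apply, MulChar.mul_apply, ← map_mul, neg_mul_neg, one_mul,
        map_one]
    · have hst : χ ^ s * χ ^ t ≠ 1 := by
        intro hc
        rw [← pow_add] at hc
        have hdv : k ∣ s + t := by
          rw [← hord]; exact orderOf_dvd_iff_pow_eq_one.mpr hc
        obtain ⟨c, hc'⟩ := hdv
        rcases c with _ | _ | c
        · omega
        · omega
        · have h2 : k * 2 ≤ k * (c + 1 + 1) := Nat.mul_le_mul_left k (by omega)
          omega
      rw [if_neg h]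
      exact_mod_cast jacobiSum_mul_jacobiSum_inv hchar (hne s hs) (hne t ht) hst
  rw [Finset.sum_congr rfl fun s hs => Finset.sum_congr rfl (key s hs)]
  have hmem : ∀ s ∈ Finset.Icc 1 (k - 1), k - s ∈ Finset.Icc 1 (k - 1) := by
    intro s hs
    rw [Finset.mem_Icc] at hs ⊢
    omega
  have hcard : (Finset.Icc 1 (k - 1)).card = k - 1 := by
    rw [Nat.card_Icc]; omega
  have hk1 : ((k - 1 : ℕ) : ℂ) = (k : ℂ) - 1 := by
    rw [Nat.cast_sub (by omega)]; norm_num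
  have inner : ∀ s ∈ Finset.Icc 1 (k - 1),
      (∑ t ∈ Finset.Icc 1 (k - 1), if t = k - s then (1 : ℂ) else (Fintype.card F : ℂ))
        = ((k : ℂ) - 2) * (Fintype.card F : ℂ) + 1 := by
    intro s hs
    have step : ∀ t ∈ Finset.Icc 1 (k - 1),
        (if t = k - s then (1 : ℂ) else (Fintype.card F : ℂ))
          = (Fintype.card F : ℂ) + (if t = k - s then 1 - (Fintype.card F : ℂ) else 0) := by
      intro t _
      by_cases h : t = k - s <;> simp [h]
    rw [Finset.sum_congr rfl step, Finset.sum_add_distrib,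
      Finset.sum_ite_eq' _ (k - s) (fun _ => 1 - (Fintype.card F : ℂ)),
      if_pos (hmem s hs), Finset.sum_const, hcard, nsmul_eq_mul, hk1]
    ring
  rw [Finset.sum_congr rfl inner, Finset.sum_const, hcard, nsmul_eq_mul, hk1]
end

section
/- Let q = p^r with p prime, p ≡ 2 (mod 3), r even, and let χ_3 be a character of F_q* of order 3. Then J(χ_3, χ_3) = J(χ̄_3, χ̄_3) = -(-p)^{r/2}, and consequently J(χ_3,χ_3) + J(χ̄_3,χ̄_3) = -2(-p)^{r/2}. -/
theorem jacobiSum_cubic_char_inert {F : Type*} [Field F] [Fintype F]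
    (p r : ℕ) (hp : p.Prime) (hq : Fintype.card F = p ^ r)
    (hp3 : p % 3 = 2) (hr : Even r) (hq3 : Fintype.card F % 3 = 1)
    (χ : MulChar F ℂ) (hord : orderOf χ = 3) :
    jacobiSum χ χ = -(-(p : ℂ)) ^ (r / 2) ∧
    jacobiSum χ⁻¹ χ⁻¹ = -(-(p : ℂ)) ^ (r / 2) ∧
    jacobiSum χ χ + jacobiSum χ⁻¹ χ⁻¹ = -2 * (-(p : ℂ)) ^ (r / 2) := by
  have hχ3 : χ ^ 3 = 1 := hord ▸ pow_orderOf_eq_one χ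
  have hχ1 : χ ≠ 1 := by
    intro h; rw [h, orderOf_one] at hord; norm_num at hord
  have hχ2 : χ * χ ≠ 1 := by
    intro h
    have h2 : χ ^ 2 = 1 := by rwa [pow_two]
    have := orderOf_dvd_of_pow_eq_one h2
    rw [hord] at this; norm_num at this
  -- characteristic
  obtain ⟨n, hcp, hcard⟩ := FiniteField.card F (ringChar F)
  have hrp : ringChar F = p := by
    have hdvd : ringChar F ∣ p ^ r := by
      rw [← hq, hcard]; exact dvd_pow_self _ n.2.ne'
    exact (Nat.prime_dvd_prime_iff_eq hcp hp).mp (hcp.dvd_of_dvd_pow hdvd)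
  haveI hF : CharP F p := hrp ▸ ringChar.charP F
  haveI : ExpChar F p := ExpChar.prime hp
  haveI : Fact p.Prime := ⟨hp⟩
  -- J(χ⁻¹,χ⁻¹) = J(χ,χ)
  have hinv : χ⁻¹ = χ ^ 2 := by
    apply inv_eq_of_mul_eq_one_right
    rw [← pow_succ']
    exact hχ3
  have hpow : ∀ y : F, χ (y ^ p) = χ y ^ 2 := by
    intro y
    rcases eq_or_ne y 0 with rfl | hy
    · rw [zero_pow hp.ne_zero, χ.map_zero]; ring
    · have h1 : χ y ^ 3 = 1 := by
        rw [← χ.pow_apply' (by norm_num : (3:ℕ) ≠ 0), hχ3,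
          MulChar.one_apply (isUnit_iff_ne_zero.mpr hy)]
      have hpe : p = 3 * (p / 3) + 2 := by omega
      calc χ (y ^ p) = χ y ^ p := by rw [map_pow]
        _ = χ y ^ (3 * (p/3) + 2) := by rw [← hpe]
        _ = (χ y ^ 3) ^ (p/3) * χ y ^ 2 := by rw [pow_add, pow_mul]
        _ = χ y ^ 2 := by rw [h1, one_pow, one_mul]
  have hJJ : jacobiSum χ⁻¹ χ⁻¹ = jacobiSum χ χ := by
    rw [hinv]
    show ∑ x : F, (χ^2) x * (χ^2) (1-x) = ∑ x : F, χ x * χ (1 - x)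
    calc ∑ x : F, (χ^2) x * (χ^2) (1-x)
        = ∑ x : F, χ (x^p) * χ (1 - x^p) := by
          refine Finset.sum_congr rfl fun x _ => ?_
          rw [MulChar.pow_apply' χ two_ne_zero, MulChar.pow_apply' χ two_ne_zero,
            ← hpow, ← hpow]
          congr 2
          rw [sub_pow_char, one_pow]
      _ = ∑ y : F, χ y * χ (1 - y) :=
          Fintype.sum_bijective (frobenius F p) (bijective_frobenius F p)
            _ _ (fun x => rfl)
  have hcardJ : jacobiSum χ χ * jacobiSum χ⁻¹ χ⁻¹ = (Fintype.card F : ℂ) := by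
    refine jacobiSum_mul_jacobiSum_inv ?_ hχ1 hχ1 hχ2
    rw [ringChar.eq_zero, hrp]
    exact (hp.ne_zero).symm
  set J := jacobiSum χ χ with hJ
  set s := r / 2 with hs
  have hrs : r = 2 * s := by obtain ⟨t, ht⟩ := hr; omega
  rw [hJJ] at hcardJ
  have hJsq : J ^ 2 = ((p:ℂ) ^ s) ^ 2 := by
    rw [pow_two, hcardJ, hq, hrs]
    push_cast
    ring
  -- J = ± p^s
  have hε : J = (p:ℂ)^s ∨ J = -(p:ℂ)^s := by
    have h0 : (J - (p:ℂ)^s) * (J + (p:ℂ)^s) = 0 := by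
      linear_combination hJsq
    rcases mul_eq_zero.mp h0 with h | h
    · left; linear_combination h
    · right; linear_combination h
  -- primitive cube root of unity
  have hμ : IsPrimitiveRoot (Complex.exp (2 * Real.pi * Complex.I / 3)) 3 :=
    Complex.isPrimitiveRoot_exp 3 (by norm_num)
  set μ := Complex.exp (2 * Real.pi * Complex.I / 3) with hμdef
  have hμq : μ^2 + μ + 1 = 0 := by
    have h3 : μ ^ 3 = 1 := hμ.pow_eq_one
    have h1 : μ ≠ 1 := hμ.ne_one (by norm_num)
    have h0 : (μ - 1) * (μ^2 + μ + 1) = 0 := by linear_combination h3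
    rcases mul_eq_zero.mp h0 with h | h
    · exact absurd (sub_eq_zero.mp h) h1
    · exact h
  have him : μ.im ≠ 0 := by
    intro h0
    have hre := congrArg Complex.re hμq
    simp only [Complex.add_re, Complex.one_re, Complex.zero_re, pow_two,
      Complex.mul_re, h0] at hre
    nlinarith [hre]
  have hdvd3 : 3 ∣ Fintype.card F - 1 := by omega
  obtain ⟨z, hz, hJz⟩ := exists_jacobiSum_eq_neg_one_add (by norm_num) hχ3 hχ3 hdvd3 hμ
  -- z = a + b μ
  have hzab : ∀ w ∈ Algebra.adjoin ℤ {μ}, ∃ a b : ℤ, w = (a : ℂ) + (b : ℂ) * μ := by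
    intro w hw
    induction hw using Algebra.adjoin_induction with
    | mem x hx =>
        exact ⟨0, 1, by simp [Set.mem_singleton_iff.mp hx]⟩
    | algebraMap t =>
        exact ⟨t, 0, by simp⟩
    | add x y hx hy ihx ihy =>
        obtain ⟨a, b, rfl⟩ := ihx
        obtain ⟨c, d, rfl⟩ := ihy
        exact ⟨a + c, b + d, by push_cast; ring⟩
    | mul x y hx hy ihx ihy =>
        obtain ⟨a, b, rfl⟩ := ihx
        obtain ⟨c, d, rfl⟩ := ihy
        refine ⟨a * c - b * d, a * d + b * c - b * d, ?_⟩
        push_cast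
        linear_combination ((b:ℂ) * d) * hμq
  obtain ⟨a, b, hab⟩ := hzab z hz
  rw [hab] at hJz
  have hJval : J = ((3*b - 1 : ℤ) : ℂ) + ((3*(b - a) : ℤ) : ℂ) * μ := by
    rw [hJ, hJz]
    push_cast
    linear_combination ((b:ℂ) * μ + (a:ℂ) - 3*(b:ℂ)) * hμq
  have hpim : ((p:ℂ)^s).im = 0 := by
    rw [← Nat.cast_pow]
    exact Complex.natCast_im _
  have hJim : J.im = 0 := by
    rcases hε with h | h
    · rw [h]; exact hpim
    · rw [h, Complex.neg_im, hpim, neg_zero]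
  have hab' : a = b := by
    have h1 := congrArg Complex.im hJval
    rw [hJim] at h1
    simp only [Complex.add_im, Complex.mul_im, Complex.intCast_im, Complex.intCast_re,
      zero_mul, add_zero, zero_add] at h1
    have h2 : ((3*(b - a) : ℤ) : ℝ) = 0 := by
      rcases mul_eq_zero.mp h1.symm with h | h
      · exact h
      · exact absurd h him
    have h3 : (3 : ℤ) * (b - a) = 0 := by exact_mod_cast h2
    omega
  have hJint : J = ((3*b - 1 : ℤ) : ℂ) := by
    rw [hJval, hab']
    push_cast; ring
  -- mod 3 arithmetic
  have hp3' : (p : ZMod 3) = -1 := by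
    have h := ZMod.natCast_mod p 3
    rw [hp3] at h
    rw [← h]; decide
  have h30 : (3 : ZMod 3) = 0 := by decide
  have hml : ((3*b - 1 : ℤ) : ZMod 3) = -1 := by
    push_cast
    rw [h30]
    ring
  have key : J = -(-(p : ℂ)) ^ s := by
    rcases hε with h | h
    · -- J = p^s; need s odd
      have hc : ((3*b-1 : ℤ) : ℂ) = (((p:ℤ)^s : ℤ) : ℂ) := by
        rw [← hJint, h]; push_cast; ring
      have hint : (3*b-1 : ℤ) = (p:ℤ)^s := by exact_mod_cast hc
      have hm : (-1 : ZMod 3) = ((p : ZMod 3))^s := by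
        rw [← hml, hint]; push_cast; ring
      rw [hp3'] at hm
      have hsodd : Odd s := by
        rcases Nat.even_or_odd s with he | ho
        · rw [he.neg_one_pow] at hm
          exact absurd hm (by decide)
        · exact ho
      rw [h, hsodd.neg_pow, neg_neg]
    · -- J = -p^s; need s even
      have hc : ((3*b-1 : ℤ) : ℂ) = ((-(p:ℤ)^s : ℤ) : ℂ) := by
        rw [← hJint, h]; push_cast; ring
      have hint : (3*b-1 : ℤ) = -(p:ℤ)^s := by exact_mod_cast hc
      have hm : (-1 : ZMod 3) = -((p : ZMod 3))^s := by
        rw [← hml, hint]; push_cast; ring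
      rw [hp3'] at hm
      have hseven : Even s := by
        rcases Nat.even_or_odd s with he | ho
        · exact he
        · rw [ho.neg_pow] at hm
          simp only [neg_neg, one_pow] at hm
          exact absurd hm (by decide)
      rw [h, hseven.neg_pow]
  refine ⟨key, hJJ.trans key, ?_⟩
  rw [hJJ, key]
  ring
end

section
/- Let q = p^r ≡ 1 (mod 4) for a prime p, with q = x² + y², x ≡ 1 (mod 4), y even, and p ∤ x when p ≡ 1 (mod 4). Let χ_4 be a character of F_q* of order 4. Then J(χ_4,χ_4)² + J(χ̄_4,χ̄_4)² = 2x² - 2y² = 4x² - 2q. -/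
/-!
Write `J(χ, χ) = a + b i`. The values of `χ` are fourth roots of unity, so `χ` lifts to a
`ℤ[i]`-valued character and `a, b ∈ ℤ`. Since `J(χ⁻¹, χ⁻¹)` is the conjugate of `J(χ, χ)`,
the identity `J(χ, χ) J(χ⁻¹, χ⁻¹) = q` reads `a² + b² = q`, and `J(χ, χ) ≡ -1 mod (i - 1)²`
makes `a` odd. If `p ≡ 1 mod 4`, then `p ∤ a`: a ring map `ℤ[i] → 𝔽_q` turns `χ` into
`t ↦ t ^ (3m)`, where `q = 4m + 1`, and sends `J(χ, χ)` to `-(-1)ᵐ C(3m, m)`, which Lucas's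
theorem shows is nonzero in `𝔽_q`. The odd entry of a representation of `p ^ r` as a sum of two
squares is determined up to sign (among entries prime to `p` when `p ≡ 1 mod 4`), so `a² = x²`,
`b² = y²`, and `J(χ, χ)² + J(χ⁻¹, χ⁻¹)² = 2(a² - b²) = 2x² - 2y²`.
-/

open Finset ComplexConjugate

namespace Nat

theorem Prime.not_dvd_choose_three_mul_mul_add {p u m : ℕ} (hp : p.Prime) (hu : 3 * u < p)
    (hm : ¬ p ∣ (3 * m).choose m) : ¬ p ∣ (3 * (p * m + u)).choose (p * m + u) := by
  have := Fact.mk hp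
  have hlucas := Choose.choose_modEq_choose_mod_mul_choose_div_nat
    (n := 3 * (p * m + u)) (k := p * m + u) (p := p)
  have h3 : 3 * (p * m + u) = 3 * u + p * (3 * m) := by ring
  rw [h3, add_comm (p * m), add_mul_mod_self_left, add_mul_mod_self_left,
    add_mul_div_left _ _ hp.pos, add_mul_div_left _ _ hp.pos, mod_eq_of_lt hu,
    mod_eq_of_lt (by omega), div_eq_of_lt hu, div_eq_of_lt (by omega), zero_add,
    zero_add] at hlucas
  rw [h3, add_comm (p * m), hlucas.dvd_iff dvd_rfl, hp.dvd_mul, not_or]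
  exact ⟨hp.coprime_iff_not_dvd.1 (hp.coprime_choose_of_lt hu (by omega)), hm⟩

/-- In base `p` every digit of `m` equals `(p - 1) / 4`, so Lucas's theorem applies digitwise. -/
theorem Prime.not_dvd_choose_three_mul {p r m : ℕ} (hp : p.Prime) (hp4 : p % 4 = 1)
    (hm : 4 * m + 1 = p ^ r) : ¬ p ∣ (3 * m).choose m := by
  induction r generalizing m with
  | zero =>
    obtain rfl : m = 0 := by simpa using hm
    simpa using hp.one_lt.ne'
  | succ r ih =>
    obtain ⟨m', hm'⟩ : ∃ m', 4 * m' + 1 = p ^ r := ⟨p ^ r / 4, by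
      have := Nat.pow_mod p r 4
      rw [hp4, one_pow] at this
      omega⟩
    obtain rfl : m = p * m' + (p - 1) / 4 := by
      have : 4 * ((p - 1) / 4) + 1 = p := by omega
      rw [pow_succ, ← hm'] at hm
      nlinarith
    exact hp.not_dvd_choose_three_mul_mul_add (by omega) (ih hm')

end Nat

namespace Int

theorem natCast_dvd_of_dvd_sq_add_sq {p : ℕ} [Fact p.Prime] (hp3 : p % 4 = 3) {a b : ℤ}
    (h : (p : ℤ) ∣ a ^ 2 + b ^ 2) : (p : ℤ) ∣ a := by
  by_contra ha
  rw [← ZMod.intCast_zmod_eq_zero_iff_dvd] at h ha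
  push_cast at h
  exact ZMod.mod_four_ne_three_of_sq_eq_neg_sq ha (eq_neg_of_add_eq_zero_left h) hp3

theorem sq_eq_pow_of_sq_add_sq_eq_pow {p : ℕ} (hp : p.Prime) (hp3 : p % 4 = 3) (r : ℕ)
    {a b : ℤ} (ha : Odd a) (h : a ^ 2 + b ^ 2 = (p : ℤ) ^ r) : a ^ 2 = (p : ℤ) ^ r := by
  have := Fact.mk hp
  induction r using Nat.strong_induction_on generalizing a b with
  | _ r ih =>
  rcases r with _ | r
  · have : a ≠ 0 := by rintro rfl; simp at ha
    nlinarith [sq_nonneg b, one_le_abs this, sq_abs a]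
  have hpq : (p : ℤ) ∣ a ^ 2 + b ^ 2 := h ▸ dvd_pow_self _ r.succ_ne_zero
  obtain ⟨b', rfl⟩ := natCast_dvd_of_dvd_sq_add_sq hp3 (add_comm (a ^ 2) _ ▸ hpq)
  obtain ⟨a', rfl⟩ := natCast_dvd_of_dvd_sq_add_sq hp3 hpq
  have hp0 : (p : ℤ) ≠ 0 := by exact_mod_cast hp.ne_zero
  rcases r with _ | r
  · have : (p : ℤ) * (p * (a' ^ 2 + b' ^ 2)) = p * 1 := by linear_combination h
    have hp1 : (p : ℤ) ∣ 1 := ⟨_, (mul_left_cancel₀ hp0 this).symm⟩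
    exact absurd (natCast_dvd_natCast.1 hp1) hp.not_dvd_one
  · have h' : a' ^ 2 + b' ^ 2 = (p : ℤ) ^ r := by
      refine mul_left_cancel₀ (pow_ne_zero 2 hp0) ?_
      linear_combination h
    linear_combination (p : ℤ) ^ 2 * ih r (by omega) (odd_mul.1 ha).2 h'

/-- `q` divides `a x + b y`, and `(a x + b y)² + (a y - b x)² = q²` leaves only
`a x + b y ∈ {0, ± q}`; the value `0` would give `a² + x² = q`, which is even. -/
theorem sq_eq_sq_of_sq_add_sq_of_isCoprime {q a b x y : ℤ} (hq : Odd q) (ha : Odd a)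
    (hx : Odd x) (hab : a ^ 2 + b ^ 2 = q) (hxy : x ^ 2 + y ^ 2 = q)
    (hcop : IsCoprime q (a * x - b * y)) : a ^ 2 = x ^ 2 := by
  have hq0 : q ≠ 0 := by rintro rfl; simp at hq
  obtain ⟨t, ht⟩ : q ∣ a * x + b * y := hcop.dvd_of_dvd_mul_right
    ⟨a ^ 2 + x ^ 2 - q, by linear_combination (-y ^ 2) * hab + (a ^ 2 - q) * hxy⟩
  have hnorm : (q * t) ^ 2 + (a * y - b * x) ^ 2 = q ^ 2 := by
    rw [← ht]; linear_combination (x ^ 2 + y ^ 2) * hab + q * hxy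
  have ht1 : t ^ 2 ≤ 1 := by
    have : 0 < q ^ 2 := by positivity
    nlinarith [sq_nonneg (a * y - b * x)]
  obtain rfl | ht1 : t = 0 ∨ t ^ 2 = 1 := by
    rcases abs_le_one_iff.1 ((sq_le_one_iff_abs_le_one t).1 ht1) with h | h | h <;> simp [h]
  · have : a ^ 2 + x ^ 2 = q := by
      refine mul_left_cancel₀ hq0 ?_
      linear_combination (a * x - b * y) * ht + y ^ 2 * hab - (a ^ 2 - q) * hxy
    exact absurd (this ▸ ha.pow.add_odd hx.pow) (not_even_iff_odd.2 hq)
  · have hW : a * y - b * x = 0 :=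
      pow_eq_zero_iff two_ne_zero |>.1 (by linear_combination hnorm - q ^ 2 * ht1)
    refine mul_left_cancel₀ hq0 ?_
    linear_combination (a * y + b * x) * hW + x ^ 2 * hab - a ^ 2 * hxy

theorem sq_eq_sq_of_sq_add_sq_eq_prime_pow_of_not_dvd {p r : ℕ} (hp : p.Prime) (hp2 : p ≠ 2)
    {a b x y : ℤ} (ha : Odd a) (hx : Odd x) (hab : a ^ 2 + b ^ 2 = (p : ℤ) ^ r)
    (hxy : x ^ 2 + y ^ 2 = (p : ℤ) ^ r) (hpa : ¬ (p : ℤ) ∣ a) (hpx : ¬ (p : ℤ) ∣ x) :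
    a ^ 2 = x ^ 2 := by
  have hpz : Prime (p : ℤ) := Nat.prime_iff_prime_int.mp hp
  have hq : Odd ((p : ℤ) ^ r) := ((hp.odd_of_ne_two hp2).natCast (R := ℤ)).pow
  by_cases hV : (p : ℤ) ∣ a * x - b * y
  · refine sq_eq_sq_of_sq_add_sq_of_isCoprime (y := -y) hq ha hx hab (by linear_combination hxy)
      (hpz.coprime_iff_not_dvd.2 fun hU => ?_).pow_left
    have h2ax : (p : ℤ) ∣ 2 * (a * x) := by
      rw [show 2 * (a * x) = a * x - b * -y + (a * x - b * y) by ring]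
      exact dvd_add hU hV
    rcases hpz.dvd_mul.1 h2ax with h2 | hax
    · exact hp2 ((Nat.prime_dvd_prime_iff_eq hp Nat.prime_two).1 (by exact_mod_cast h2))
    · exact (hpz.dvd_mul.1 hax).elim hpa hpx
  · exact sq_eq_sq_of_sq_add_sq_of_isCoprime hq ha hx hab hxy
      (hpz.coprime_iff_not_dvd.2 hV).pow_left

theorem sq_eq_sq_of_sq_add_sq_eq_prime_pow {p r : ℕ} (hp : p.Prime) (hp2 : p ≠ 2)
    {a b x y : ℤ} (ha : Odd a) (hx : Odd x) (hab : a ^ 2 + b ^ 2 = (p : ℤ) ^ r)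
    (hxy : x ^ 2 + y ^ 2 = (p : ℤ) ^ r) (hpa : p % 4 = 1 → ¬ (p : ℤ) ∣ a)
    (hpx : p % 4 = 1 → ¬ (p : ℤ) ∣ x) : a ^ 2 = x ^ 2 := by
  rcases (show p % 4 = 1 ∨ p % 4 = 3 by have := hp.eq_two_or_odd; omega) with hp1 | hp3
  · exact sq_eq_sq_of_sq_add_sq_eq_prime_pow_of_not_dvd hp hp2 ha hx hab hxy (hpa hp1) (hpx hp1)
  · rw [sq_eq_pow_of_sq_add_sq_eq_pow hp hp3 r ha hab,
      sq_eq_pow_of_sq_add_sq_eq_pow hp hp3 r hx hxy]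

end Int

namespace FiniteField

variable {K : Type*} [Field K] [Fintype K]

theorem sum_pow_eq_ite [DecidableEq K] {i : ℕ} (hi : i ≠ 0) :
    ∑ x : K, x ^ i = if Fintype.card K - 1 ∣ i then -1 else 0 := by
  rw [← sum_pow_units K i]
  refine (sum_bij_ne_zero (fun (u : Kˣ) _ _ => (u : K)) (by simp)
    (fun _ _ _ _ _ _ h => Units.val_injective h) (fun x _ hx => ?_) (by simp)).symm
  have hx0 : x ≠ 0 := by rintro rfl; simp [hi] at hx
  exact ⟨Units.mk0 x hx0, mem_univ _, by simpa using hx, rfl⟩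

theorem sum_pow_three_mul_mul_one_sub_pow {m : ℕ} (hq : Fintype.card K = 4 * m + 1) :
    ∑ t : K, t ^ (3 * m) * (1 - t) ^ (3 * m) = -(-1) ^ m * ((3 * m).choose m : K) := by
  classical
  have hm : m ≠ 0 := by
    rintro rfl
    simpa using (Fintype.one_lt_card (α := K)).trans_eq hq
  have hdvd : ∀ i ≤ 3 * m, 4 * m ∣ 3 * m + i ↔ i = m := by
    intro i hi
    refine ⟨fun ⟨c, hc⟩ => ?_, fun h => ⟨1, by omega⟩⟩
    rcases c with _ | _ | c
    · omega
    · omega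
    · nlinarith
  have hexpand (t : K) : t ^ (3 * m) * (1 - t) ^ (3 * m) =
      ∑ i ∈ range (3 * m + 1), (-1) ^ i * ((3 * m).choose i : K) * t ^ (3 * m + i) := by
    rw [sub_eq_neg_add, add_pow, mul_sum]
    refine sum_congr rfl fun i _ => ?_
    rw [neg_pow, pow_add]
    ring
  calc ∑ t : K, t ^ (3 * m) * (1 - t) ^ (3 * m)
      = ∑ i ∈ range (3 * m + 1),
          (-1) ^ i * ((3 * m).choose i : K) * ∑ t : K, t ^ (3 * m + i) := by
        simp_rw [hexpand, mul_sum]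
        exact sum_comm
    _ = (-1) ^ m * ((3 * m).choose m : K) * -1 := by
        refine (sum_eq_single m (fun i hi him => ?_)
          (fun h => absurd (mem_range.2 (by omega)) h)).trans ?_
        · rw [sum_pow_eq_ite (by omega), hq, Nat.add_sub_cancel,
            if_neg (mt (hdvd i (Nat.lt_succ_iff.1 (mem_range.1 hi))).1 him), mul_zero]
        · rw [sum_pow_eq_ite (by omega), hq, Nat.add_sub_cancel, if_pos ⟨1, by omega⟩]
    _ = _ := by ring

theorem exists_isPrimitiveRoot_card_sub_one :
    ∃ g : K, IsPrimitiveRoot g (Fintype.card K - 1) := by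
  classical
  obtain ⟨g, hg⟩ := IsCyclic.exists_generator (α := Kˣ)
  refine ⟨g, IsPrimitiveRoot.coe_units_iff.2 ?_⟩
  rw [← Fintype.card_units, ← Nat.card_eq_fintype_card,
    ← orderOf_eq_card_of_forall_mem_zpowers hg]
  exact IsPrimitiveRoot.orderOf g

theorem exists_pow_eq_of_isPrimitiveRoot {g : K} (hg : IsPrimitiveRoot g (Fintype.card K - 1))
    {t : K} (ht : t ≠ 0) : ∃ e, g ^ e = t := by
  have : NeZero (Fintype.card K - 1) := ⟨(Nat.sub_pos_of_lt Fintype.one_lt_card).ne'⟩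
  obtain ⟨e, -, he⟩ := hg.eq_pow_of_pow_eq_one (pow_card_sub_one_eq_one t ht)
  exact ⟨e, he⟩

end FiniteField

namespace MulChar

theorem exists_ringHomComp_eq {R S T : Type*} [CommMonoid R] [CommRing S] [CommRing T]
    {f : S →+* T} (hf : Function.Injective f) (χ : MulChar R T)
    (hχ : ∀ a, ∃ s, f s = χ a) : ∃ χ₀ : MulChar R S, χ₀.ringHomComp f = χ := by
  choose g hg using hχ
  refine ⟨{ toFun := g
            map_one' := hf (by rw [hg, map_one, map_one])
            map_mul' := fun a b => hf (by rw [hg, map_mul, map_mul, hg, hg])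
            map_nonunit' := fun a ha => hf (by rw [hg, map_nonunit χ ha, map_zero]) }, ?_⟩
  ext a
  exact hg a

theorem orderOf_ringHomComp {R S T : Type*} [CommMonoid R] [CommRing S] [CommRing T]
    {f : S →+* T} (hf : Function.Injective f) (χ : MulChar R S) :
    orderOf (χ.ringHomComp f) = orderOf χ :=
  orderOf_injective (ringHomCompHom f) (injective_ringHomComp hf) χ

variable {F R : Type*} [Field F] [Fintype F] [CommRing R] {g : F}

theorem eq_one_of_apply_eq_one {χ : MulChar F R} (hg : IsPrimitiveRoot g (Fintype.card F - 1))
    (h : χ g = 1) : χ = 1 :=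
  eq_one_iff.2 fun a => by
    obtain ⟨e, he⟩ := FiniteField.exists_pow_eq_of_isPrimitiveRoot hg a.ne_zero
    rw [← he, map_pow, h, one_pow]

theorem apply_eq_pow_of_apply_eq_pow {η : MulChar F F}
    (hg : IsPrimitiveRoot g (Fintype.card F - 1)) {k : ℕ} (hk : k ≠ 0) (h : η g = g ^ k)
    (t : F) : η t = t ^ k := by
  rcases eq_or_ne t 0 with rfl | ht
  · rw [η.map_zero, zero_pow hk]
  · obtain ⟨e, rfl⟩ := FiniteField.exists_pow_eq_of_isPrimitiveRoot hg ht
    rw [map_pow, h, ← pow_mul, ← pow_mul, mul_comm]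

theorem apply_mul_self_eq_neg_one [IsDomain R] {χ : MulChar F R} (hχ : orderOf χ = 4)
    (hg : IsPrimitiveRoot g (Fintype.card F - 1)) : χ g * χ g = -1 := by
  have hunit : IsUnit g := hg.isUnit (Nat.sub_pos_of_lt Fintype.one_lt_card).ne'
  have h4 : χ g ^ 4 = 1 := by
    rw [← pow_apply' χ four_ne_zero, ← hχ, pow_orderOf_eq_one, one_apply hunit]
  have h2 : χ ^ 2 ≠ 1 := pow_ne_one_of_lt_orderOf two_ne_zero (by rw [hχ]; norm_num)
  have hne : χ g ^ 2 ≠ 1 := fun h =>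
    h2 (eq_one_of_apply_eq_one hg (by rwa [pow_apply' χ two_ne_zero]))
  rw [← sq]
  exact (mul_self_eq_one_iff.1 (by linear_combination h4)).resolve_left hne

end MulChar

theorem jacobiSum_inv_inv {F : Type*} [Field F] [Fintype F] (χ φ : MulChar F ℂ) :
    jacobiSum χ⁻¹ φ⁻¹ = conj (jacobiSum χ φ) := by
  simp only [jacobiSum, map_sum, map_mul, ← RCLike.star_def, MulChar.star_apply']

namespace GaussianInt

theorem isPrimitiveRoot_i : IsPrimitiveRoot (⟨0, 1⟩ : GaussianInt) 4 :=
  .of_map_of_injective (f := toComplex)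
    (by simpa [toComplex_def'] using Complex.isPrimitiveRoot_I) toComplex_injective

theorem sq_add_conj_sq (z : GaussianInt) :
    (z : ℂ) ^ 2 + conj (z : ℂ) ^ 2 = 2 * (z.re : ℂ) ^ 2 - 2 * (z.im : ℂ) ^ 2 := by
  rw [toComplex_def]
  simp only [map_add, map_mul, map_intCast, Complex.conj_I]
  linear_combination 2 * (z.im : ℂ) ^ 2 * Complex.I_sq

theorem exists_ringHom_apply_eq {R : Type*} [CommRing R] {ζ : GaussianInt} (hζ : ζ * ζ = -1)
    {w : R} (hw : w * w = -1) : ∃ ψ : GaussianInt →+* R, ψ ζ = w := by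
  have hre := congrArg Zsqrtd.re hζ
  have him := congrArg Zsqrtd.im hζ
  simp only [Zsqrtd.re_mul, Zsqrtd.im_mul, Zsqrtd.re_neg, Zsqrtd.im_neg, Zsqrtd.re_one,
    Zsqrtd.im_one] at hre him
  have h0 : ζ.re = 0 := by nlinarith [sq_nonneg ζ.re, sq_nonneg ζ.im]
  have h1 : (ζ.im : R) * ζ.im = 1 := by
    rw [← Int.cast_mul, show ζ.im * ζ.im = 1 by rw [h0] at hre; linarith, Int.cast_one]
  refine ⟨Zsqrtd.lift ⟨ζ.im * w, by linear_combination (w * w) * h1 + hw⟩, ?_⟩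
  rw [Zsqrtd.lift_apply_apply, h0, Int.cast_zero, zero_add, ← mul_assoc, h1, one_mul]

variable {F : Type*} [Field F] [Fintype F]

theorem exists_mulChar_ringHomComp_eq (χ : MulChar F ℂ) (hχ : χ ^ 4 = 1) :
    ∃ χ₀ : MulChar F GaussianInt, χ₀.ringHomComp toComplex = χ := by
  refine χ.exists_ringHomComp_eq toComplex_injective fun a => ?_
  rcases eq_or_ne a 0 with rfl | ha
  · exact ⟨0, by rw [map_zero, χ.map_zero]⟩
  · obtain ⟨k, -, hk⟩ := MulChar.exists_apply_eq_pow hχ Complex.isPrimitiveRoot_I ha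
    exact ⟨⟨0, 1⟩ ^ k, by simp [hk, toComplex_def']⟩

theorem re_sq_add_im_sq_jacobiSum {χ : MulChar F GaussianInt} (hχ : orderOf χ = 4) :
    (jacobiSum χ χ).re ^ 2 + (jacobiSum χ χ).im ^ 2 = Fintype.card F := by
  set χ' := χ.ringHomComp toComplex
  have hχ' : orderOf χ' = 4 := (MulChar.orderOf_ringHomComp toComplex_injective χ).trans hχ
  have h1 : χ' ≠ 1 := fun h => by simp [h] at hχ'
  have h2 : χ' * χ' ≠ 1 := by
    rw [← sq]
    exact pow_ne_one_of_lt_orderOf two_ne_zero (by rw [hχ']; norm_num)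
  have := jacobiSum_mul_jacobiSum_inv
    (by rw [ringChar.eq_zero]; exact (CharP.ringChar_ne_zero_of_finite F).symm) h1 h1 h2
  rw [jacobiSum_inv_inv, jacobiSum_ringHomComp χ χ toComplex, Complex.mul_conj,
    ← intCast_complex_norm, Zsqrtd.norm_def] at this
  rw [← Int.cast_inj (α := ℂ)]
  push_cast at this ⊢
  linear_combination this

theorem odd_re_jacobiSum {χ : MulChar F GaussianInt} (hχ : χ ^ 4 = 1)
    (h4 : 4 ∣ Fintype.card F - 1) : Odd (jacobiSum χ χ).re := by
  obtain ⟨z, -, hz⟩ :=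
    exists_jacobiSum_eq_neg_one_add (by norm_num) hχ hχ h4 isPrimitiveRoot_i
  have hi : ((⟨0, 1⟩ : GaussianInt) - 1) ^ 2 = ⟨0, -2⟩ := rfl
  refine ⟨z.im - 1, ?_⟩
  rw [hz, hi, Zsqrtd.re_add, Zsqrtd.re_neg, Zsqrtd.re_one, Zsqrtd.re_mul]
  ring

/-- Reduce along a ring map `ℤ[i] → F` that turns `χ` into `t ↦ t ^ (3m)`: it sends the Jacobi
sum to `∑ t ^ (3m) (1 - t) ^ (3m) = -(-1)ᵐ C(3m, m) ≠ 0`. -/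
theorem not_ringChar_dvd_jacobiSum {χ : MulChar F GaussianInt} (hχ : orderOf χ = 4) {m : ℕ}
    (hq : Fintype.card F = 4 * m + 1) (hm : ¬ ringChar F ∣ (3 * m).choose m) :
    ¬ (ringChar F : GaussianInt) ∣ jacobiSum χ χ := by
  obtain ⟨g, hg⟩ := FiniteField.exists_isPrimitiveRoot_card_sub_one (K := F)
  have hm0 : m ≠ 0 := by
    rintro rfl
    simpa using (Fintype.one_lt_card (α := F)).trans_eq hq
  have hw : g ^ (3 * m) * g ^ (3 * m) = -1 := by
    rw [hq, Nat.add_sub_cancel] at hg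
    have hneg : g ^ (2 * m) = -1 := (hg.pow (by omega) (by ring)).eq_neg_one_of_two_right
    rw [← pow_add, show 3 * m + 3 * m = 4 * m + 2 * m by ring, pow_add, hg.pow_eq_one, one_mul,
      hneg]
  obtain ⟨ψ, hψ⟩ := exists_ringHom_apply_eq (χ.apply_mul_self_eq_neg_one hχ hg) hw
  have hψχ := (χ.ringHomComp ψ).apply_eq_pow_of_apply_eq_pow hg (by omega) hψ
  have hψJ : ψ (jacobiSum χ χ) ≠ 0 := by
    rw [← jacobiSum_ringHomComp]
    simp only [jacobiSum, hψχ]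
    rw [FiniteField.sum_pow_three_mul_mul_one_sub_pow hq]
    exact mul_ne_zero (neg_ne_zero.2 (pow_ne_zero _ (neg_ne_zero.2 one_ne_zero)))
      ((ringChar.spec F _).not.2 hm)
  rintro ⟨c, hc⟩
  rw [hc, map_mul, map_natCast, ringChar.Nat.cast_ringChar, zero_mul] at hψJ
  exact hψJ rfl

theorem not_dvd_re_jacobiSum {χ : MulChar F GaussianInt} (hχ : orderOf χ = 4)
    (hp1 : ringChar F % 4 = 1) : ¬ (ringChar F : ℤ) ∣ (jacobiSum χ χ).re := by
  obtain ⟨n, hp, hcard⟩ := FiniteField.card F (ringChar F)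
  obtain ⟨m, hm⟩ : ∃ m, Fintype.card F = 4 * m + 1 := ⟨Fintype.card F / 4, by
    have := Nat.pow_mod (ringChar F) n 4
    rw [hp1, one_pow] at this
    omega⟩
  intro hre
  have him : (ringChar F : ℤ) ∣ (jacobiSum χ χ).im := by
    refine (Nat.prime_iff_prime_int.mp hp).dvd_of_dvd_pow (n := 2) ?_
    rw [eq_sub_of_add_eq' (re_sq_add_im_sq_jacobiSum hχ), hcard]
    push_cast
    exact dvd_sub (dvd_pow_self _ n.ne_zero) (dvd_pow hre two_ne_zero)
  exact not_ringChar_dvd_jacobiSum hχ hm (hp.not_dvd_choose_three_mul hp1 (hm ▸ hcard))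
    ((Zsqrtd.intCast_dvd _ _).2 ⟨hre, him⟩)

end GaussianInt

open GaussianInt in
theorem jacobiSum_quartic_sq_sum_general {F : Type*} [Field F] [Fintype F]
    (p r : ℕ) (hp : p.Prime) (hq : Fintype.card F = p ^ r)
    (x y : ℤ)
    (hxy : (Fintype.card F : ℤ) = x ^ 2 + y ^ 2)
    (hx : x % 4 = 1)
    (hpx : p % 4 = 1 → ¬ (p : ℤ) ∣ x)
    (χ : MulChar F ℂ) (hord : orderOf χ = 4) :
    jacobiSum χ χ ^ 2 + jacobiSum χ⁻¹ χ⁻¹ ^ 2 = 2 * (x : ℂ) ^ 2 - 2 * (y : ℂ) ^ 2 ∧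
    2 * (x : ℂ) ^ 2 - 2 * (y : ℂ) ^ 2 = 4 * (x : ℂ) ^ 2 - 2 * (Fintype.card F : ℂ) := by
  have := Fact.mk hp
  have := charP_of_card_eq_prime_pow hq
  have hchar : ringChar F = p := ringChar.eq F p
  have hq' : (Fintype.card F : ℤ) = (p : ℤ) ^ r := by exact_mod_cast hq
  obtain ⟨χ₀, rfl⟩ := exists_mulChar_ringHomComp_eq χ (hord ▸ pow_orderOf_eq_one χ)
  have hord₀ : orderOf χ₀ = 4 :=
    (MulChar.orderOf_ringHomComp toComplex_injective χ₀).symm ▸ hord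
  have h4 : 4 ∣ Fintype.card F - 1 := hord₀ ▸ χ₀.orderOf_dvd_card_sub_one
  have hp2 : p ≠ 2 := fun h2 => by
    have := FiniteField.even_card_of_char_two (hchar.trans h2)
    have := Fintype.card_pos (α := F)
    omega
  set J := jacobiSum χ₀ χ₀
  have hnorm : J.re ^ 2 + J.im ^ 2 = Fintype.card F := re_sq_add_im_sq_jacobiSum hord₀
  have hre : J.re ^ 2 = x ^ 2 :=
    Int.sq_eq_sq_of_sq_add_sq_eq_prime_pow hp hp2
      (odd_re_jacobiSum (hord₀ ▸ pow_orderOf_eq_one χ₀) h4) (Int.odd_iff.2 (by omega))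
      (hnorm.trans hq') (hxy.symm.trans hq')
      (fun hp1 => hchar ▸ not_dvd_re_jacobiSum hord₀ (hchar ▸ hp1)) hpx
  have him : J.im ^ 2 = y ^ 2 := by linear_combination hnorm - hre + hxy
  have hreC : (J.re : ℂ) ^ 2 = (x : ℂ) ^ 2 := by exact_mod_cast hre
  have himC : (J.im : ℂ) ^ 2 = (y : ℂ) ^ 2 := by exact_mod_cast him
  have hxyC : (Fintype.card F : ℂ) = (x : ℂ) ^ 2 + (y : ℂ) ^ 2 := by exact_mod_cast hxy
  rw [jacobiSum_inv_inv, jacobiSum_ringHomComp χ₀ χ₀ toComplex, sq_add_conj_sq]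
  exact ⟨by linear_combination 2 * hreC - 2 * himC, by linear_combination 2 * hxyC⟩

theorem jacobiSum_quartic_sq_sum {F : Type*} [Field F] [Fintype F]
    (p r : ℕ) (hp : p.Prime) (hq : Fintype.card F = p ^ r)
    (hq4 : Fintype.card F % 4 = 1) (x y : ℤ)
    (hxy : (Fintype.card F : ℤ) = x ^ 2 + y ^ 2)
    (hx : x % 4 = 1) (hy : Even y)
    (hpx : p % 4 = 1 → ¬ (p : ℤ) ∣ x)
    (χ : MulChar F ℂ) (hord : orderOf χ = 4) :
    jacobiSum χ χ ^ 2 + jacobiSum χ⁻¹ χ⁻¹ ^ 2 = 2 * (x : ℂ) ^ 2 - 2 * (y : ℂ) ^ 2 ∧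
    2 * (x : ℂ) ^ 2 - 2 * (y : ℂ) ^ 2 = 4 * (x : ℂ) ^ 2 - 2 * (Fintype.card F : ℂ) :=
  jacobiSum_quartic_sq_sum_general p r hp hq x y hxy hx hpx χ hord
end

section
/- Let q ≡ 1 (mod 8) be a prime power and χ_8 a character of F_q* of order 8. Then J(χ_8, χ_8²) = χ_8(-4)·J(χ_4, χ_4), where χ_4 = χ_8². -/
open Finset MulChar

section Aux

variable {F : Type*} [Field F] [Fintype F]

private lemma octic_char_ne_two (hq8 : Fintype.card F % 8 = 1) : ringChar F ≠ 2 := by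
  intro h
  have h2 : Fintype.card F % 2 = 0 := FiniteField.even_card_of_char_two h
  have h3 : Fintype.card F % 8 % 2 = Fintype.card F % 2 :=
    Nat.mod_mod_of_dvd _ (by norm_num)
  omega

/-- The fourth power of a character of order 8 is the quadratic character. -/
private lemma octic_pow_four_eq_quadChar [DecidableEq F] (hq8 : Fintype.card F % 8 = 1)
    (χ : MulChar F ℂ) (hord : orderOf χ = 8) (x : F) :
    (χ ^ 4) x = ((quadraticChar F x : ℤ) : ℂ) := by
  rcases eq_or_ne x 0 with rfl | hx
  · simp [MulChar.map_zero]
  obtain ⟨g, hg⟩ := IsCyclic.exists_generator (α := Fˣ)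
  -- the value of `χ ^ 4` at the generator is `-1`
  have h8 : χ ^ 8 = 1 := hord ▸ pow_orderOf_eq_one χ
  have hsq : (χ ^ 4) ↑g * (χ ^ 4) ↑g = 1 := by
    have : (χ ^ 4) ↑g * (χ ^ 4) ↑g = (χ ^ 8) ↑g := by
      simp only [MulChar.pow_apply_coe]
      ring
    rw [this, h8, MulChar.one_apply_coe]
  have hval : (χ ^ 4) ↑g = -1 := by
    rcases mul_self_eq_one_iff.mp hsq with h1 | h1
    · exfalso
      have h41 : χ ^ 4 = 1 := by
        apply MulChar.ext
        intro a
        obtain ⟨k, hk⟩ := mem_powers_iff_mem_zpowers.mpr (hg a)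
        rw [← hk, MulChar.one_apply_coe]
        have : ((g ^ k : Fˣ) : F) = ((g : F)) ^ k := by push_cast; ring
        rw [this, map_pow, h1, one_pow]
      exact pow_ne_one_of_lt_orderOf (by norm_num) (by omega) h41
    · exact h1
  -- the generator is not a square
  have hns : ¬ IsSquare ((g : Fˣ) : F) := by
    rintro ⟨y, hy⟩
    have hy0 : y ≠ 0 := by
      intro h
      rw [h, mul_zero] at hy
      exact (Units.ne_zero g) hy
    have hgu : g = Units.mk0 y hy0 * Units.mk0 y hy0 := by
      ext
      simpa using hy
    have hcard : Fintype.card Fˣ = Fintype.card F - 1 := by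
      rw [Fintype.card_units]
    have hcard8 : 8 ≤ Fintype.card F := by
      have := Fintype.one_lt_card (α := F)
      omega
    have hog : orderOf g = Fintype.card Fˣ :=
      (orderOf_eq_card_of_forall_mem_zpowers hg).trans Nat.card_eq_fintype_card
    have h2dvd : 2 * (Fintype.card Fˣ / 2) = Fintype.card Fˣ := by
      rw [hcard]; omega
    have hpow : g ^ (Fintype.card Fˣ / 2) = 1 := by
      rw [hgu, ← sq, ← pow_mul, h2dvd, pow_card_eq_one]
    have : Fintype.card Fˣ / 2 ≠ 0 ∧ Fintype.card Fˣ / 2 < orderOf g := by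
      rw [hog, hcard]
      constructor <;> omega
    exact pow_ne_one_of_lt_orderOf this.1 this.2 hpow
  have hqg : quadraticChar F ((g : Fˣ) : F) = -1 :=
    quadraticChar_neg_one_iff_not_isSquare.mpr hns
  -- write `x` as a power of the generator
  obtain ⟨k, hk⟩ := mem_powers_iff_mem_zpowers.mpr (hg (Units.mk0 x hx))
  have hk' : g ^ k = Units.mk0 x hx := hk
  have hxk : x = ((g : Fˣ) : F) ^ k := by
    calc x = ((Units.mk0 x hx : Fˣ) : F) := rfl
      _ = ((g ^ k : Fˣ) : F) := by rw [hk']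
      _ = ((g : Fˣ) : F) ^ k := by push_cast; ring
  rw [hxk, map_pow, map_pow, hval, hqg]
  push_cast
  ring

/-- Counting square roots: summing `f (t^2)` over `t`. -/
private lemma sum_sq_eq [DecidableEq F] (hq8 : Fintype.card F % 8 = 1) (f : F → ℂ) :
    ∑ t : F, f (t ^ 2) = ∑ x : F, (((quadraticChar F x : ℤ) : ℂ) + 1) * f x := by
  have h2 : ringChar F ≠ 2 := octic_char_ne_two hq8
  rw [← Fintype.sum_fiberwise (fun t : F => t ^ 2) (fun t => f (t ^ 2))]
  refine Finset.sum_congr rfl fun x _ => ?_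
  have hinner : ∀ t : {t : F // t ^ 2 = x}, f ((t : F) ^ 2) = f x := fun t => by rw [t.2]
  rw [Finset.sum_congr rfl fun t _ => hinner t, Finset.sum_const, nsmul_eq_mul]
  congr 1
  have hc2 : (Finset.univ.card (α := {t : F // t ^ 2 = x}) : ℤ) = quadraticChar F x + 1 := by
    rw [Finset.card_univ]
    have hcc : Fintype.card {t : F // t ^ 2 = x} = {y : F | y ^ 2 = x}.toFinset.card := by
      rw [Set.toFinset_card]
      exact Fintype.card_congr (Equiv.subtypeEquivRight fun _ => Iff.rfl)
    rw [hcc]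
    exact_mod_cast quadraticChar_card_sqrts h2 x
  have := congrArg (fun z : ℤ => (z : ℂ)) hc2
  push_cast at this
  exact this

/-- Duplication identity: `χ³(4) J(χ³,χ³) = J(χ⁴,χ³)` for `χ` of order 8. -/
private lemma octic_duplication [DecidableEq F] (hq8 : Fintype.card F % 8 = 1)
    (χ : MulChar F ℂ) (hord : orderOf χ = 8) :
    (χ ^ 3) 4 * jacobiSum (χ ^ 3) (χ ^ 3) = jacobiSum (χ ^ 4) (χ ^ 3) := by
  have h2 : (2 : F) ≠ 0 := Ring.two_ne_zero (octic_char_ne_two hq8)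
  set ρ := χ ^ 3 with hρ
  have hρ1 : ρ ≠ 1 := pow_ne_one_of_lt_orderOf (by norm_num) (by omega)
  have step1 : (ρ : MulChar F ℂ) 4 * jacobiSum ρ ρ = ∑ x : F, ρ (1 - (2 * x - 1) ^ 2) := by
    rw [jacobiSum, Finset.mul_sum]
    refine Finset.sum_congr rfl fun x _ => ?_
    rw [← map_mul, ← map_mul]
    congr 1
    ring
  have step2 : ∑ x : F, ρ (1 - (2 * x - 1) ^ 2) = ∑ t : F, ρ (1 - t ^ 2) := by
    have := Equiv.sum_comp ((Equiv.mulLeft₀ (2 : F) h2).trans (Equiv.subRight 1))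
      (fun t => ρ (1 - t ^ 2))
    rw [← this]
    rfl
  have step3 : ∑ t : F, ρ (1 - t ^ 2)
      = ∑ x : F, (((quadraticChar F x : ℤ) : ℂ) + 1) * ρ (1 - x) :=
    sum_sq_eq hq8 (fun x => ρ (1 - x))
  have step4 : ∑ x : F, ρ (1 - x) = 0 := by
    have := Equiv.sum_comp (Equiv.subLeft (1 : F)) (fun y => ρ y)
    have h' : ∑ x : F, ρ (1 - x) = ∑ y : F, ρ y := this
    rw [h', MulChar.sum_eq_zero_of_ne_one hρ1]
  have step5 : ∑ x : F, (((quadraticChar F x : ℤ) : ℂ) + 1) * ρ (1 - x)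
      = jacobiSum (χ ^ 4) ρ := by
    rw [jacobiSum]
    have : ∀ x : F, (((quadraticChar F x : ℤ) : ℂ) + 1) * ρ (1 - x)
        = (χ ^ 4) x * ρ (1 - x) + ρ (1 - x) := by
      intro x
      rw [octic_pow_four_eq_quadChar hq8 χ hord]
      ring
    rw [Finset.sum_congr rfl fun x _ => this x, Finset.sum_add_distrib, step4, add_zero]
  rw [step1, step2, step3, step5]

end Aux

theorem jacobiSum_octic_char {F : Type*} [Field F] [Fintype F]
    (hq8 : Fintype.card F % 8 = 1)
    (χ₈ : MulChar F ℂ) (hord : orderOf χ₈ = 8) :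
    jacobiSum χ₈ (χ₈ ^ 2) = χ₈ (-4) * jacobiSum (χ₈ ^ 2) (χ₈ ^ 2) := by
  classical
  set q : ℕ := Fintype.card F with hq
  let ψ : AddChar F ℂ := AddChar.FiniteField.primitiveChar_to_Complex F
  have hψ : ψ.IsPrimitive := AddChar.FiniteField.primitiveChar_to_Complex_isPrimitive F
  have hcard : (q : ℂ) ≠ 0 := Nat.cast_ne_zero.mpr Fintype.card_ne_zero
  have hk : ∀ k : ℕ, k ≠ 0 → k < 8 → χ₈ ^ k ≠ 1 := fun k h1 h2 =>
    pow_ne_one_of_lt_orderOf h1 (by omega)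
  have hg3 : gaussSum (χ₈ ^ 3) ψ ≠ 0 :=
    gaussSum_ne_zero_of_nontrivial hcard (hk 3 (by norm_num) (by norm_num)) hψ
  have hg4 : gaussSum (χ₈ ^ 4) ψ ≠ 0 :=
    gaussSum_ne_zero_of_nontrivial hcard (hk 4 (by norm_num) (by norm_num)) hψ
  -- abbreviations
  set g1 := gaussSum χ₈ ψ with hg1def
  set g2 := gaussSum (χ₈ ^ 2) ψ with hg2def
  set g3 := gaussSum (χ₈ ^ 3) ψ with hg3def
  set g4 := gaussSum (χ₈ ^ 4) ψ with hg4def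
  set g6 := gaussSum (χ₈ ^ 6) ψ with hg6def
  set g7 := gaussSum (χ₈ ^ 7) ψ with hg7def
  set a := χ₈ (-1) with hadef
  set b := χ₈ 4 with hbdef
  -- basic facts about a and b
  have haa : a * a = 1 := by
    rw [hadef, ← map_mul]
    norm_num
  have hbb : b * b = 1 := by
    have h16 : χ₈ 16 = 1 := by
      obtain ⟨s, hs⟩ : IsSquare (2 : F) := by
        refine (FiniteField.isSquare_two_iff).mpr ?_
        have hq8' : Fintype.card F % 8 = 1 := hq8
        exact ⟨by omega, by omega⟩
      have hs0 : s ≠ 0 := by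
        intro h
        rw [h, mul_zero] at hs
        exact Ring.two_ne_zero (octic_char_ne_two hq8) hs
      have h16s : (16 : F) = s ^ 8 := by
        have : (16 : F) = 2 ^ 4 := by norm_num
        rw [this, hs]; ring
      rw [h16s, map_pow]
      have h1 : χ₈ s ^ 8 = (χ₈ ^ 8) s := (MulChar.pow_apply' χ₈ (by norm_num) s).symm
      have h8 : χ₈ ^ 8 = 1 := by rw [← hord]; exact pow_orderOf_eq_one χ₈
      rw [h1, h8, MulChar.one_apply hs0.isUnit]
    rw [hbdef, ← map_mul]
    have : (4 : F) * 4 = 16 := by norm_num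
    rw [this, h16]
  -- Gauss sum / Jacobi sum relations
  have e1 : g3 * jacobiSum χ₈ (χ₈ ^ 2) = g1 * g2 := by
    have h := jacobiSum_mul_nontrivial (χ := χ₈) (φ := χ₈ ^ 2)
      (by rw [← pow_succ']; exact hk 3 (by norm_num) (by norm_num)) ψ
    rwa [← pow_succ'] at h
  have e2 : g4 * jacobiSum (χ₈ ^ 2) (χ₈ ^ 2) = g2 * g2 := by
    have h := jacobiSum_mul_nontrivial (χ := χ₈ ^ 2) (φ := χ₈ ^ 2)
      (by rw [← pow_add]; exact hk 4 (by norm_num) (by norm_num)) ψ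
    rwa [← pow_add] at h
  have e3 : g6 * jacobiSum (χ₈ ^ 3) (χ₈ ^ 3) = g3 * g3 := by
    have h := jacobiSum_mul_nontrivial (χ := χ₈ ^ 3) (φ := χ₈ ^ 3)
      (by rw [← pow_add]; exact hk 6 (by norm_num) (by norm_num)) ψ
    rwa [← pow_add] at h
  have e4 : g7 * jacobiSum (χ₈ ^ 4) (χ₈ ^ 3) = g4 * g3 := by
    have h := jacobiSum_mul_nontrivial (χ := χ₈ ^ 4) (φ := χ₈ ^ 3)
      (by rw [← pow_add]; exact hk 7 (by norm_num) (by norm_num)) ψ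
    rwa [← pow_add] at h
  have e5 : g1 * g7 = a * (q : ℂ) := by
    have hχ1 : χ₈ ≠ 1 := by
      have := hk 1 (by norm_num) (by norm_num)
      rwa [pow_one] at this
    have h := gaussSum_mul_gaussSum_pow_orderOf_sub_one (χ := χ₈) (ψ := ψ) hχ1 hψ
    rw [hord] at h
    norm_num at h
    rw [hg1def, hg7def, hadef]
    exact h
  have e6 : g2 * g6 = (q : ℂ) := by
    have hord2 : orderOf (χ₈ ^ 2) = 4 := by
      rw [orderOf_pow, hord]
      rfl
    have h := gaussSum_mul_gaussSum_pow_orderOf_sub_one (χ := χ₈ ^ 2) (ψ := ψ)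
      (hk 2 (by norm_num) (by norm_num)) hψ
    rw [hord2] at h
    norm_num at h
    rw [← pow_mul] at h
    norm_num at h
    have hm1 : (χ₈ ^ 2) (-1) = 1 := by
      rw [MulChar.pow_apply' χ₈ (by norm_num), sq, ← map_mul]
      norm_num
    rw [hm1, one_mul] at h
    rw [hg2def, hg6def]
    exact h
  have e7 : b * b * b * jacobiSum (χ₈ ^ 3) (χ₈ ^ 3) = jacobiSum (χ₈ ^ 4) (χ₈ ^ 3) := by
    have h := octic_duplication hq8 χ₈ hord
    have h4 : (χ₈ ^ 3) (4 : F) = b * b * b := by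
      rw [MulChar.pow_apply' χ₈ (by norm_num), hbdef]
      ring
    rwa [h4] at h
  -- combine
  have h9 : g6 * g4 = g7 * (b * b * b) * g3 := by
    apply mul_right_cancel₀ hg3
    calc g6 * g4 * g3 = g6 * (g4 * g3) := by ring
      _ = g6 * (g7 * jacobiSum (χ₈ ^ 4) (χ₈ ^ 3)) := by rw [e4]
      _ = g6 * (g7 * (b * b * b * jacobiSum (χ₈ ^ 3) (χ₈ ^ 3))) := by rw [e7]
      _ = g7 * (b * b * b) * (g6 * jacobiSum (χ₈ ^ 3) (χ₈ ^ 3)) := by ring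
      _ = g7 * (b * b * b) * (g3 * g3) := by rw [e3]
      _ = g7 * (b * b * b) * g3 * g3 := by ring
  have h11 : g1 * g4 = a * b * (g2 * g3) := by
    apply mul_left_cancel₀ hcard
    calc (q : ℂ) * (g1 * g4) = g1 * g4 * (g2 * g6) := by rw [e6]; ring
      _ = g1 * g2 * (g6 * g4) := by ring
      _ = g1 * g2 * (g7 * (b * b * b) * g3) := by rw [h9]
      _ = (g1 * g7) * (b * b * b) * g2 * g3 := by ring
      _ = (a * (q : ℂ)) * (b * b * b) * g2 * g3 := by rw [e5]
      _ = (q : ℂ) * (a * ((b * b) * b) * g2 * g3) := by ring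
      _ = (q : ℂ) * (a * b * (g2 * g3)) := by rw [hbb]; ring
  have hfinal : jacobiSum χ₈ (χ₈ ^ 2) = a * b * jacobiSum (χ₈ ^ 2) (χ₈ ^ 2) := by
    apply mul_left_cancel₀ (mul_ne_zero hg3 hg4)
    calc g3 * g4 * jacobiSum χ₈ (χ₈ ^ 2) = g4 * (g3 * jacobiSum χ₈ (χ₈ ^ 2)) := by ring
      _ = g4 * (g1 * g2) := by rw [e1]
      _ = g2 * (g1 * g4) := by ring
      _ = g2 * (a * b * (g2 * g3)) := by rw [h11]
      _ = a * b * g3 * (g2 * g2) := by ring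
      _ = a * b * g3 * (g4 * jacobiSum (χ₈ ^ 2) (χ₈ ^ 2)) := by rw [e2]
      _ = g3 * g4 * (a * b * jacobiSum (χ₈ ^ 2) (χ₈ ^ 2)) := by ring
  have hab : χ₈ (-4) = a * b := by
    rw [hadef, hbdef, ← map_mul]
    norm_num
  rw [hfinal, hab]
end

section
/- Let k ≥ 2 and q be a prime power with q ≡ 1 (mod k) if q even, q ≡ 1 (mod 2k) if q odd. Let H_k(q) be the induced subgraph of the generalized Paley graph G_k(q) on the vertex set S_k of k-th power residues. Then for every vertex a of H_k(q), deg_{H_k(q)}(a) = (1/k²)·(R_k(q) + q - 3k + 1), where R_k(q) := Σ_{s,t=1, s+t ≢ 0 (mod k)}^{k-1} J(χ_k^s, χ_k^t) for χ_k a character of F_q* of order k. -/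
open Finset

set_option linter.unusedSectionVars false
set_option linter.unusedVariables false

section GPSAux

variable {F : Type*} [Field F] [Fintype F] {k : ℕ} {g : Fˣ} {χ : MulChar F ℂ}

lemma gps_zero_not (hk : k ≠ 0) : ¬ ∃ c : F, c ≠ 0 ∧ c ^ k = (0:F) := by
  rintro ⟨c, hc, hck⟩
  exact hc ((pow_eq_zero_iff hk).mp hck)

lemma gps_mul_mem {a x : F} (ha : ∃ c : F, c ≠ 0 ∧ c ^ k = a) :
    (∃ c : F, c ≠ 0 ∧ c ^ k = a * x) ↔ (∃ c : F, c ≠ 0 ∧ c ^ k = x) := by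
  obtain ⟨c, hc, hck⟩ := ha
  have ha0 : a ≠ 0 := hck ▸ pow_ne_zero k hc
  constructor
  · rintro ⟨d, hd, hdk⟩
    refine ⟨c⁻¹ * d, mul_ne_zero (inv_ne_zero hc) hd, ?_⟩
    rw [mul_pow, inv_pow, hck, hdk, inv_mul_cancel_left₀ ha0]
  · rintro ⟨d, hd, hdk⟩
    exact ⟨c * d, mul_ne_zero hc hd, by rw [mul_pow, hck, hdk]⟩

lemma gps_gen_pow_mem (hg : ∀ x : Fˣ, x ∈ Subgroup.zpowers g)
    (hkq : k ∣ Fintype.card F - 1) (m : ℕ) :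
    (∃ c : F, c ≠ 0 ∧ c ^ k = ((g : F)) ^ m) ↔ k ∣ m := by
  classical
  have hog : orderOf g = Fintype.card F - 1 := by
    rw [orderOf_eq_card_of_forall_mem_zpowers hg, Nat.card_eq_fintype_card, Fintype.card_units]
  constructor
  · rintro ⟨c, hc, hck⟩
    obtain ⟨j, hj⟩ := mem_powers_iff_mem_zpowers.mpr (hg (Units.mk0 c hc))
    have hcg : c = (g : F) ^ j := by
      have := congrArg (Units.val) hj
      simpa [Units.val_pow_eq_pow_val] using this.symm
    have : g ^ (j * k) = g ^ m := by
      apply Units.ext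
      push_cast [Units.val_pow_eq_pow_val]
      rw [pow_mul, ← hcg, hck]
    have hmod := (pow_eq_pow_iff_modEq.mp this)
    rw [hog] at hmod
    have hdvd : ((Fintype.card F - 1 : ℕ) : ℤ) ∣ (m : ℤ) - (j * k : ℕ) := hmod.dvd
    have hk1 : (k : ℤ) ∣ (m : ℤ) - (j * k : ℕ) := dvd_trans (Int.natCast_dvd_natCast.mpr hkq) hdvd
    have hk2 : (k : ℤ) ∣ ((j * k : ℕ) : ℤ) := by
      push_cast; exact Dvd.intro j (mul_comm _ _)
    have : (k : ℤ) ∣ (m : ℤ) := by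
      have := dvd_add hk1 hk2
      rwa [sub_add_cancel] at this
    exact_mod_cast this
  · rintro ⟨j, rfl⟩
    exact ⟨(g : F) ^ j, pow_ne_zero j (Units.ne_zero g), by rw [← pow_mul, mul_comm]⟩

lemma gps_zeta_pow_eq_one (hord : orderOf χ = k) (hg : ∀ x : Fˣ, x ∈ Subgroup.zpowers g)
    (m : ℕ) : (χ (g : F)) ^ m = 1 ↔ k ∣ m := by
  constructor
  · intro h
    have hχm : χ ^ m = 1 := by
      apply MulChar.ext
      intro u
      obtain ⟨j, hj⟩ := mem_powers_iff_mem_zpowers.mpr (hg u)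
      have hu : (u : F) = (g : F) ^ j := by
        have := congrArg (Units.val) hj
        simpa [Units.val_pow_eq_pow_val] using this.symm
      rw [MulChar.pow_apply_coe, MulChar.one_apply_coe, hu, map_pow, ← pow_mul, mul_comm,
        pow_mul, h, one_pow]
    rw [← hord]
    exact orderOf_dvd_of_pow_eq_one hχm
  · rintro ⟨j, rfl⟩
    have hχk : χ ^ k = 1 := by rw [← hord]; exact pow_orderOf_eq_one χ
    rw [pow_mul, ← MulChar.pow_apply_coe χ k g, hχk, MulChar.one_apply_coe, one_pow]

lemma gps_ker (hk : k ≠ 0) (hord : orderOf χ = k) (hg : ∀ x : Fˣ, x ∈ Subgroup.zpowers g)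
    (hkq : k ∣ Fintype.card F - 1) {y : F} (hy : y ≠ 0) :
    χ y = 1 ↔ ∃ c : F, c ≠ 0 ∧ c ^ k = y := by
  obtain ⟨m, hm⟩ := mem_powers_iff_mem_zpowers.mpr (hg (Units.mk0 y hy))
  have hym : y = (g : F) ^ m := by
    have := congrArg (Units.val) hm
    simpa [Units.val_pow_eq_pow_val] using this.symm
  rw [hym, map_pow, gps_zeta_pow_eq_one hord hg, ← gps_gen_pow_mem hg hkq]

lemma gps_neg_one_mem (hk : k ≠ 0) (hg : ∀ x : Fˣ, x ∈ Subgroup.zpowers g)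
    (hodd : Odd (Fintype.card F) → 2 * k ∣ Fintype.card F - 1) :
    ∃ c : F, c ≠ 0 ∧ c ^ k = (-1 : F) := by
  classical
  have hog : orderOf g = Fintype.card F - 1 := by
    rw [orderOf_eq_card_of_forall_mem_zpowers hg, Nat.card_eq_fintype_card, Fintype.card_units]
  have hq2 : 2 ≤ Fintype.card F := Fintype.one_lt_card
  rcases Nat.even_or_odd (Fintype.card F) with he | ho
  · have h2 : ringChar F = 2 := FiniteField.even_card_iff_char_two.mpr (Nat.even_iff.mp he)
    haveI : CharP F 2 := by rw [← h2]; exact ringChar.charP F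
    have : (-1 : F) = 1 := by rw [CharTwo.neg_eq]
    exact ⟨1, one_ne_zero, by rw [one_pow, this]⟩
  · obtain ⟨d, hd⟩ := hodd ho
    have hq3 : 3 ≤ Fintype.card F := by rcases ho with ⟨m, hm⟩; omega
    have hd0 : 0 < d := by
      rcases Nat.eq_zero_or_pos d with h | h
      · subst h; simp at hd; omega
      · exact h
    have hk0 : 0 < k := Nat.pos_of_ne_zero hk
    refine ⟨(g : F) ^ d, pow_ne_zero d (Units.ne_zero g), ?_⟩
    rw [← pow_mul]
    have hsq : ((g : F) ^ (d * k)) * ((g : F) ^ (d * k)) = 1 := by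
      rw [← pow_add]
      have : d * k + d * k = Fintype.card F - 1 := by rw [hd]; ring
      rw [this]
      have := pow_orderOf_eq_one g
      rw [hog] at this
      have := congrArg (Units.val) this
      simpa [Units.val_pow_eq_pow_val] using this
    rcases mul_self_eq_one_iff.mp hsq with h1 | h1
    · exfalso
      have hgu : g ^ (d * k) = 1 := by
        apply Units.ext
        simpa [Units.val_pow_eq_pow_val] using h1
      have hdvd := orderOf_dvd_of_pow_eq_one hgu
      rw [hog] at hdvd
      have hle := Nat.le_of_dvd (by positivity) hdvd
      rw [hd] at hle
      nlinarith
    · exact h1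

lemma gps_chi_neg_one (hk : k ≠ 0) (hord : orderOf χ = k)
    (hg : ∀ x : Fˣ, x ∈ Subgroup.zpowers g)
    (hkq : k ∣ Fintype.card F - 1)
    (hodd : Odd (Fintype.card F) → 2 * k ∣ Fintype.card F - 1) :
    χ (-1 : F) = 1 :=
  (gps_ker hk hord hg hkq (by simp : (-1 : F) ≠ 0)).mpr (gps_neg_one_mem hk hg hodd)

open Classical in
lemma gps_indicator (hk : k ≠ 0) (hord : orderOf χ = k)
    (hg : ∀ x : Fˣ, x ∈ Subgroup.zpowers g) (hkq : k ∣ Fintype.card F - 1) (y : F) :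
    ∑ s ∈ Finset.range k, (χ ^ s) y
      = if ∃ c : F, c ≠ 0 ∧ c ^ k = y then (k : ℂ) else 0 := by
  by_cases hy : y = 0
  · subst hy
    rw [if_neg (gps_zero_not hk)]
    refine Finset.sum_eq_zero fun s _ => ?_
    exact MulChar.map_nonunit _ (by simp)
  · have hterm : ∀ s ∈ Finset.range k, (χ ^ s) y = (χ y) ^ s := by
      intro s _
      rcases Nat.eq_zero_or_pos s with h | h
      · subst h
        rw [pow_zero, pow_zero, MulChar.one_apply (isUnit_iff_ne_zero.mpr hy)]
      · exact MulChar.pow_apply' χ (Nat.pos_iff_ne_zero.mp h) y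
    rw [Finset.sum_congr rfl hterm]
    by_cases h1 : χ y = 1
    · rw [if_pos ((gps_ker hk hord hg hkq hy).mp h1)]
      simp [h1]
    · rw [if_neg (fun hmem => h1 ((gps_ker hk hord hg hkq hy).mpr hmem))]
      rw [geom_sum_eq h1]
      have hyk : (χ y) ^ k = 1 := by
        have hχk : χ ^ k = 1 := by rw [← hord]; exact pow_orderOf_eq_one χ
        rw [← MulChar.pow_apply' χ hk, hχk, MulChar.one_apply (isUnit_iff_ne_zero.mpr hy)]
      rw [hyk, sub_self, zero_div]

end GPSAux
theorem genPaley_subgraph_degree {F : Type*} [Field F] [Fintype F]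
    (k : ℕ) (hk : 2 ≤ k)
    (heven : Even (Fintype.card F) → Fintype.card F % k = 1)
    (hodd : Odd (Fintype.card F) → Fintype.card F % (2 * k) = 1)
    (G : SimpleGraph F)
    (hG : ∀ a b : F, G.Adj a b ↔ a ≠ b ∧ ∃ c : F, c ≠ 0 ∧ c ^ k = a - b)
    (χ : MulChar F ℂ) (hord : orderOf χ = k) :
    ∀ a : {a : F | ∃ c : F, c ≠ 0 ∧ c ^ k = a},
      (((G.induce {a : F | ∃ c : F, c ≠ 0 ∧ c ^ k = a}).neighborSet a).ncard : ℂ)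
        = 1 / (k : ℂ) ^ 2 *
            ((∑ s ∈ Finset.Icc 1 (k - 1),
                ∑ t ∈ (Finset.Icc 1 (k - 1)).filter (fun t => ¬ k ∣ s + t),
                  jacobiSum (χ ^ s) (χ ^ t))
              + (Fintype.card F : ℂ) - 3 * (k : ℂ) + 1) := by
  classical
  rintro ⟨a, ha⟩
  have hk0 : k ≠ 0 := by omega
  have hq2 : 2 ≤ Fintype.card F := Fintype.one_lt_card
  have hkq : k ∣ Fintype.card F - 1 := by
    rcases Nat.even_or_odd (Fintype.card F) with he | ho
    · have h1 := heven he
      exact ⟨Fintype.card F / k, by have := Nat.div_add_mod (Fintype.card F) k; omega⟩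
    · have h1 := hodd ho
      have h2 : 2 * k ∣ Fintype.card F - 1 :=
        ⟨Fintype.card F / (2 * k), by have := Nat.div_add_mod (Fintype.card F) (2 * k); omega⟩
      exact dvd_trans (dvd_mul_left k 2) h2
  have hoddd : Odd (Fintype.card F) → 2 * k ∣ Fintype.card F - 1 := fun ho =>
    ⟨Fintype.card F / (2 * k), by
      have := Nat.div_add_mod (Fintype.card F) (2 * k); have := hodd ho; omega⟩
  obtain ⟨g, hg⟩ := IsCyclic.exists_generator (α := Fˣ)
  have hχneg : χ (-1 : F) = 1 := gps_chi_neg_one hk0 hord hg hkq hoddd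
  have hind := gps_indicator hk0 hord hg hkq (χ := χ)
  set S : Set F := {a : F | ∃ c : F, c ≠ 0 ∧ c ^ k = a} with hS
  have ha0 : a ≠ 0 := by rintro rfl; exact gps_zero_not hk0 ha
  set P : F → Prop := fun x => (∃ c : F, c ≠ 0 ∧ c ^ k = x) ∧ (∃ c : F, c ≠ 0 ∧ c ^ k = 1 - x)
    with hP
  -- Counting step
  have himg : Subtype.val '' ((G.induce S).neighborSet ⟨a, ha⟩)
      = {b : F | b ∈ S ∧ (a - b) ∈ S} := by
    ext b
    constructor
    · rintro ⟨⟨b', hb'⟩, hadj, rfl⟩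
      have hGadj : G.Adj a b' := hadj
      rw [hG] at hGadj
      exact ⟨hb', hGadj.2⟩
    · rintro ⟨hb, hab⟩
      have hne : a ≠ b := by
        rintro rfl
        rw [sub_self] at hab
        exact gps_zero_not hk0 hab
      exact ⟨⟨b, hb⟩, (hG a b).mpr ⟨hne, hab⟩, rfl⟩
  have h1 : ((G.induce S).neighborSet ⟨a, ha⟩).ncard = {b : F | b ∈ S ∧ (a - b) ∈ S}.ncard := by
    rw [← himg, Set.ncard_image_of_injective _ Subtype.val_injective]
  have himg2 : {b : F | b ∈ S ∧ (a - b) ∈ S} = (fun x => a * x) '' {x : F | P x} := by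
    ext b
    simp only [Set.mem_setOf_eq, Set.mem_image, hP]
    constructor
    · rintro ⟨hb, hab⟩
      refine ⟨a⁻¹ * b, ⟨?_, ?_⟩, mul_inv_cancel_left₀ ha0 b⟩
      · exact (gps_mul_mem ha).mp (by rwa [mul_inv_cancel_left₀ ha0])
      · exact (gps_mul_mem ha).mp
          (by rw [mul_sub, mul_one, mul_inv_cancel_left₀ ha0]; exact hab)
    · rintro ⟨x, ⟨hx, h1x⟩, rfl⟩
      exact ⟨(gps_mul_mem ha).mpr hx, by rw [← mul_one_sub]; exact (gps_mul_mem ha).mpr h1x⟩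
  have h2 : {b : F | b ∈ S ∧ (a - b) ∈ S}.ncard = {x : F | P x}.ncard := by
    rw [himg2, Set.ncard_image_of_injective _ (mul_right_injective₀ ha0)]
  have h3 : {x : F | P x}.ncard = (Finset.univ.filter P).card := by
    rw [Set.ncard_eq_toFinset_card', Set.toFinset_setOf]
  have hcount : ((G.induce S).neighborSet ⟨a, ha⟩).ncard = (Finset.univ.filter P).card := by
    rw [h1, h2, h3]
  -- The double character sum computes the count
  have hbig : ∑ s ∈ Finset.range k, ∑ t ∈ Finset.range k, jacobiSum (χ ^ s) (χ ^ t)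
      = (k : ℂ) ^ 2 * ((Finset.univ.filter P).card : ℂ) := by
    calc ∑ s ∈ Finset.range k, ∑ t ∈ Finset.range k, jacobiSum (χ ^ s) (χ ^ t)
        = ∑ s ∈ Finset.range k, ∑ t ∈ Finset.range k, ∑ x : F,
            (χ ^ s) x * (χ ^ t) (1 - x) := rfl
      _ = ∑ s ∈ Finset.range k, ∑ x : F, ∑ t ∈ Finset.range k,
            (χ ^ s) x * (χ ^ t) (1 - x) :=
          Finset.sum_congr rfl fun s _ => Finset.sum_comm
      _ = ∑ x : F, ∑ s ∈ Finset.range k, ∑ t ∈ Finset.range k,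
            (χ ^ s) x * (χ ^ t) (1 - x) := Finset.sum_comm
      _ = ∑ x : F, (∑ s ∈ Finset.range k, (χ ^ s) x) *
            (∑ t ∈ Finset.range k, (χ ^ t) (1 - x)) := by
          refine Finset.sum_congr rfl fun x _ => ?_
          rw [Finset.sum_mul_sum]
      _ = ∑ x : F, (if P x then (k : ℂ) ^ 2 else 0) := by
          refine Finset.sum_congr rfl fun x _ => ?_
          rw [hind x, hind (1 - x)]
          by_cases hx1 : ∃ c : F, c ≠ 0 ∧ c ^ k = x
          · by_cases hx2 : ∃ c : F, c ≠ 0 ∧ c ^ k = 1 - x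
            · rw [if_pos hx1, if_pos hx2, if_pos (⟨hx1, hx2⟩ : P x), sq]
            · rw [if_pos hx1, if_neg hx2, if_neg (show ¬ P x from fun h => hx2 h.2), mul_zero]
          · rw [if_neg hx1, if_neg (show ¬ P x from fun h => hx1 h.1), zero_mul]
      _ = ((Finset.univ.filter P).card : ℕ) • ((k : ℂ) ^ 2) := by
          rw [← Finset.sum_filter, Finset.sum_const]
      _ = (k : ℂ) ^ 2 * ((Finset.univ.filter P).card : ℂ) := by
          rw [nsmul_eq_mul, mul_comm]
  -- Splitting the double sum
  have hIcc : Finset.Icc 1 (k - 1) = Finset.Ico 1 k := by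
    rw [← Finset.Ico_add_one_right_eq_Icc]
    congr 1
    omega
  have hcardI : (Finset.Icc 1 (k - 1)).card = k - 1 := by
    rw [Nat.card_Icc]; omega
  have hrange : ∀ f : ℕ → ℂ, ∑ s ∈ Finset.range k, f s
      = f 0 + ∑ s ∈ Finset.Icc 1 (k - 1), f s := by
    intro f
    rw [hIcc, Finset.range_eq_Ico, Finset.sum_eq_sum_Ico_succ_bot (by omega) f]
  have hne1 : ∀ s ∈ Finset.Icc 1 (k - 1), χ ^ s ≠ 1 := by
    intro s hs h
    rw [Finset.mem_Icc] at hs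
    have hdvd := orderOf_dvd_of_pow_eq_one h
    rw [hord] at hdvd
    have := Nat.le_of_dvd (by omega) hdvd
    omega
  have hχk : χ ^ k = 1 := by rw [← hord]; exact pow_orderOf_eq_one χ
  have hfilter : ∀ s ∈ Finset.Icc 1 (k - 1),
      (Finset.Icc 1 (k - 1)).filter (fun t => k ∣ s + t) = {k - s} := by
    intro s hs
    rw [Finset.mem_Icc] at hs
    ext t
    simp only [Finset.mem_filter, Finset.mem_Icc, Finset.mem_singleton]
    constructor
    · rintro ⟨⟨ht1, ht2⟩, c, hc⟩
      have hc1 : c = 1 := by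
        rcases c with _ | _ | c
        · omega
        · rfl
        · exfalso
          have : k * (c + 1 + 1) = k * c + 2 * k := by ring
          omega
      subst hc1
      omega
    · rintro rfl
      exact ⟨⟨by omega, by omega⟩, 1, by omega⟩
  have hinvJ : ∀ s ∈ Finset.Icc 1 (k - 1), jacobiSum (χ ^ s) (χ ^ (k - s)) = -1 := by
    intro s hs
    have hmem := hs
    rw [Finset.mem_Icc] at hmem
    have hinv : χ ^ (k - s) = (χ ^ s)⁻¹ := by
      apply eq_inv_of_mul_eq_one_right
      rw [← pow_add]
      have hsk : s + (k - s) = k := by omega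
      rw [hsk, hχk]
    rw [hinv, jacobiSum_nontrivial_inv (hne1 s hs),
      MulChar.pow_apply' χ (by omega : s ≠ 0), hχneg, one_pow]
  have hsplit : ∑ s ∈ Finset.range k, ∑ t ∈ Finset.range k, jacobiSum (χ ^ s) (χ ^ t)
      = (∑ s ∈ Finset.Icc 1 (k - 1),
          ∑ t ∈ (Finset.Icc 1 (k - 1)).filter (fun t => ¬ k ∣ s + t),
            jacobiSum (χ ^ s) (χ ^ t))
          + (Fintype.card F : ℂ) - 3 * (k : ℂ) + 1 := by
    rw [hrange]
    have hf0 : ∑ t ∈ Finset.range k, jacobiSum (χ ^ 0) (χ ^ t)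
        = ((Fintype.card F : ℂ) - 2) + ((k - 1 : ℕ) : ℂ) * (-1) := by
      rw [hrange]
      congr 1
      · simp only [pow_zero]
        exact jacobiSum_one_one
      · calc ∑ t ∈ Finset.Icc 1 (k - 1), jacobiSum (χ ^ 0) (χ ^ t)
            = ∑ t ∈ Finset.Icc 1 (k - 1), (-1 : ℂ) :=
              Finset.sum_congr rfl (fun t ht => by
                rw [pow_zero]; exact jacobiSum_one_nontrivial (hne1 t ht))
          _ = ((k - 1 : ℕ) : ℂ) * (-1) := by
              rw [Finset.sum_const, hcardI, nsmul_eq_mul]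
    have hfs : ∀ s ∈ Finset.Icc 1 (k - 1),
        ∑ t ∈ Finset.range k, jacobiSum (χ ^ s) (χ ^ t)
          = (∑ t ∈ (Finset.Icc 1 (k - 1)).filter (fun t => ¬ k ∣ s + t),
              jacobiSum (χ ^ s) (χ ^ t)) - 2 := by
      intro s hs
      rw [hrange]
      have h0 : jacobiSum (χ ^ s) (χ ^ 0) = -1 := by
        rw [pow_zero, jacobiSum_comm]
        exact jacobiSum_one_nontrivial (hne1 s hs)
      rw [h0, ← Finset.sum_filter_add_sum_filter_not (Finset.Icc 1 (k - 1))
        (fun t => k ∣ s + t), hfilter s hs, Finset.sum_singleton, hinvJ s hs]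
      ring
    rw [hf0, Finset.sum_congr rfl hfs, Finset.sum_sub_distrib, Finset.sum_const, hcardI,
      nsmul_eq_mul]
    have hkc : ((k - 1 : ℕ) : ℂ) = (k : ℂ) - 1 := by
      rw [Nat.cast_sub (by omega : 1 ≤ k), Nat.cast_one]
    rw [hkc]
    ring
  -- Conclusion
  have hk0' : (k : ℂ) ≠ 0 := Nat.cast_ne_zero.mpr hk0
  rw [hcount, ← hsplit, hbig, one_div, inv_mul_cancel_left₀ (pow_ne_zero 2 hk0')]
end

section
/- Let k ≥ 2 and q be a prime power with q ≡ 1 (mod k) if q even, q ≡ 1 (mod 2k) if q odd. For any positive integer n, the number of complete subgraphs of order n+1 in the generalized Paley graph G_k(q) equals (q/(n+1)) times the number of complete subgraphs of order n in H_k(q), where H_k(q) is the induced subgraph of G_k(q) on the set of k-th power residues. -/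
/-!
Adjacency in `G_k(q)` depends only on the difference of the endpoints, so every translation
`x ↦ x + c` is an automorphism and each vertex lies in as many `(n+1)`-cliques as `0` does.
An `(n+1)`-clique through `0` is `0` together with an `n`-clique in the neighbourhood of `0`,
which is the set of nonzero `k`-th powers. Counting pairs (vertex, `(n+1)`-clique containing it)
in two ways gives `(n + 1) K_{n+1}(G_k(q)) = q K_n(H_k(q))`.
-/

open Finset

namespace SimpleGraph

variable {V : Type*} (G : SimpleGraph V)

theorem ncard_cliqueSet_succ_sep_mem (v : V) (n : ℕ) :
    {s ∈ G.cliqueSet (n + 1) | v ∈ s}.ncard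
      = ((G.induce (G.neighborSet v)).cliqueSet n).ncard := by
  classical
  let f : Finset (G.neighborSet v) → Finset V := fun t ↦ insert v (t.map (.subtype _))
  have hv (t : Finset (G.neighborSet v)) : v ∉ t.map (.subtype _) := by simp
  have hf : Function.Injective f := fun t t' h ↦ by
    simpa [f, erase_insert (hv _)] using congrArg (erase · v) h
  rw [← Set.ncard_image_of_injective _ hf]
  congr 1
  ext s
  simp only [Set.mem_ofPred_eq, Set.mem_image, mem_cliqueSet_iff, isNClique_induce_iff]
  constructor
  · rintro ⟨hs, hvs⟩
    have hsub : ∀ w ∈ s.erase v, w ∈ G.neighborSet v := fun w hw ↦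
      hs.isClique hvs (mem_erase.1 hw).2 (mem_erase.1 hw).1.symm
    refine ⟨(s.erase v).subtype (· ∈ G.neighborSet v), ?_, ?_⟩
    · rw [subtype_map_of_mem hsub]
      exact hs.erase_of_mem hvs
    · simp only [f, subtype_map_of_mem hsub, insert_erase hvs]
  · rintro ⟨t, ht, rfl⟩
    refine ⟨ht.insert fun w hw ↦ ?_, mem_insert_self _ _⟩
    obtain ⟨⟨u, hu⟩, -, rfl⟩ := mem_map.1 hw
    exact hu

theorem ncard_cliqueSet_sep_mem_apply (e : V ≃ V) (he : G.map e = G) (v : V) (n : ℕ) :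
    {s ∈ G.cliqueSet n | e v ∈ s}.ncard = {s ∈ G.cliqueSet n | v ∈ s}.ncard := by
  have : {s ∈ G.cliqueSet n | e v ∈ s} = map e.toEmbedding '' {s ∈ G.cliqueSet n | v ∈ s} := by
    conv_lhs => rw [← he, cliqueSet_map_of_equiv]
    ext s
    simp only [Set.mem_ofPred_eq, Set.mem_image, mem_cliqueSet_iff]
    constructor
    · rintro ⟨⟨t, ht, rfl⟩, hvt⟩
      exact ⟨t, ⟨ht, (mem_map' _).1 hvt⟩, rfl⟩
    · rintro ⟨t, ⟨ht, hvt⟩, rfl⟩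
      exact ⟨⟨t, ht, rfl⟩, mem_map_of_mem _ hvt⟩
  rw [this, Set.ncard_image_of_injective _ (Finset.map_injective _)]

theorem map_addRight_eq_self [AddGroup V] (hG : ∀ a b c : V, G.Adj a b → G.Adj (a + c) (b + c))
    (c : V) : G.map (Equiv.addRight c).toEmbedding = G := by
  ext a b
  simp only [map_adj]
  constructor
  · rintro ⟨a, b, hab, rfl, rfl⟩
    exact hG a b c hab
  · intro hab
    exact ⟨a - c, b - c, by simpa [sub_eq_add_neg] using hG a b (-c) hab, by simp, by simp⟩

theorem mul_ncard_cliqueSet_of_ncard_sep_mem_eq [Fintype V] {n N : ℕ}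
    (h : ∀ v, {s ∈ G.cliqueSet n | v ∈ s}.ncard = N) :
    n * (G.cliqueSet n).ncard = Fintype.card V * N := by
  classical
  have hN (v : V) : #{s ∈ G.cliqueFinset n | v ∈ s} = N := by
    rw [← h v, ← Set.ncard_coe_finset, coe_filter]
    simp_rw [mem_cliqueFinset_iff, mem_cliqueSet_iff]
  rw [← coe_cliqueFinset, Set.ncard_coe_finset, ← sum_card hN,
    sum_congr rfl fun s hs ↦ (mem_cliqueFinset_iff.1 hs).card_eq, sum_const, smul_eq_mul, mul_comm]

theorem succ_mul_ncard_cliqueSet_succ [AddGroup V] [Fintype V]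
    (hG : ∀ a b c : V, G.Adj a b → G.Adj (a + c) (b + c)) (n : ℕ) :
    (n + 1) * (G.cliqueSet (n + 1)).ncard
      = Fintype.card V * ((G.induce (G.neighborSet 0)).cliqueSet n).ncard := by
  refine G.mul_ncard_cliqueSet_of_ncard_sep_mem_eq fun v ↦ ?_
  rw [← G.ncard_cliqueSet_succ_sep_mem, ← zero_add v]
  exact G.ncard_cliqueSet_sep_mem_apply _ (G.map_addRight_eq_self hG v) 0 _

end SimpleGraph

theorem genPaley_clique_count_relation_general {F : Type*} [Field F] [Fintype F]
    (k : ℕ)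
    (G : SimpleGraph F)
    (hG : ∀ a b : F, G.Adj a b ↔ a ≠ b ∧ ∃ c : F, c ≠ 0 ∧ c ^ k = a - b)
    (n : ℕ) :
    ((G.cliqueSet (n + 1)).ncard : ℚ)
      = (Fintype.card F : ℚ) / (n + 1) *
          ((G.induce {a : F | ∃ c : F, c ≠ 0 ∧ c ^ k = a}).cliqueSet n).ncard := by
  have hS : {a : F | ∃ c : F, c ≠ 0 ∧ c ^ k = a} = G.neighborSet 0 := by
    ext a
    rw [Set.mem_ofPred_eq, SimpleGraph.mem_neighborSet, G.adj_comm, hG, sub_zero]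
    exact (and_iff_right_of_imp fun ⟨c, hc, hca⟩ ↦ hca ▸ pow_ne_zero k hc).symm
  have htrans (a b c : F) (hab : G.Adj a b) : G.Adj (a + c) (b + c) := by
    rw [hG] at hab ⊢
    simpa using hab
  have hcount := G.succ_mul_ncard_cliqueSet_succ htrans n
  rw [hS, div_mul_eq_mul_div, eq_div_iff (by positivity), mul_comm]
  exact_mod_cast hcount

theorem genPaley_clique_count_relation {F : Type*} [Field F] [Fintype F]
    (k : ℕ) (hk : 2 ≤ k)
    (heven : Even (Fintype.card F) → Fintype.card F % k = 1)
    (hodd : Odd (Fintype.card F) → Fintype.card F % (2 * k) = 1)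
    (G : SimpleGraph F)
    (hG : ∀ a b : F, G.Adj a b ↔ a ≠ b ∧ ∃ c : F, c ≠ 0 ∧ c ^ k = a - b)
    (n : ℕ) (hn : 0 < n) :
    ((G.cliqueSet (n + 1)).ncard : ℚ)
      = (Fintype.card F : ℚ) / (n + 1) *
          ((G.induce {a : F | ∃ c : F, c ≠ 0 ∧ c ^ k = a}).cliqueSet n).ncard :=
  genPaley_clique_count_relation_general k G hG n
end

section
/- Let k ≥ 2 and q be a prime power with q ≡ 1 (mod k) if q even, q ≡ 1 (mod 2k) if q odd. Let H_k(q) be the induced subgraph of G_k(q) on the k-th power residues S_k, and H_k^1(q) the induced subgraph of H_k(q) on the neighbors of 1. Then for any positive integer n, K_{n+1}(H_k(q)) = ((q-1)/(k(n+1)))·K_n(H_k^1(q)), where K_m denotes the number of complete subgraphs of order m. -/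
/-!
Removing a vertex `v` from the `(n + 1)`-cliques containing it gives a bijection onto the
`n`-cliques of the graph induced on the neighbourhood of `v`. Multiplication by any `a ∈ S_k` is
an automorphism of `H_k(q)`, and these act transitively on `S_k`, so every vertex lies in exactly
`K_n(H_k^1(q))` cliques of order `n + 1`. Counting pairs (vertex, clique containing it) gives
`(n + 1) K_{n+1}(H_k(q)) = |S_k| K_n(H_k^1(q))`, and `|S_k| = (q - 1) / k` because `S_k` is the
image of the `k`-th power map on the cyclic group `F_q^*`, of index `gcd(q - 1, k) = k`.
-/

namespace SimpleGraph

variable {α β : Type*} {G : SimpleGraph α} {G' : SimpleGraph β}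

theorem Iso.ncard_cliqueSet_eq (φ : G ≃g G') (n : ℕ) :
    (G.cliqueSet n).ncard = (G'.cliqueSet n).ncard := by
  have hG : G = G'.map (φ : α ≃ β).symm :=
    ((map_symm G' (φ : α ≃ β)).trans (Embedding.comap_eq φ.toEmbedding)).symm
  rw [hG, cliqueSet_map_of_equiv, Set.ncard_image_of_injective _ (Finset.map_injective _)]

def Iso.induceNeighborSet (φ : G ≃g G') (v : α) :
    G.induce (G.neighborSet v) ≃g G'.induce (G'.neighborSet (φ v)) :=
  φ.induce (φ.toEquiv.bijOn fun _ => φ.apply_mem_neighborSet_iff)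

theorem ncard_setOf_isNClique_succ_mem (G : SimpleGraph α) (v : α) (n : ℕ) :
    {T | G.IsNClique (n + 1) T ∧ v ∈ T}.ncard
      = ((G.induce (G.neighborSet v)).cliqueSet n).ncard := by
  classical
  set cone : Finset (G.neighborSet v) → Finset α :=
    fun t => insert v (t.map (.subtype _)) with hcone
  have hv : ∀ t : Finset (G.neighborSet v), v ∉ t.map (.subtype _) := by simp
  have himage : cone '' (G.induce (G.neighborSet v)).cliqueSet n
      = {T | G.IsNClique (n + 1) T ∧ v ∈ T} := by
    ext T
    constructor
    · rintro ⟨t, ht, rfl⟩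
      refine ⟨((isNClique_induce_iff _ t n).mp ht).insert ?_, Finset.mem_insert_self _ _⟩
      simp only [Finset.mem_map, Function.Embedding.coe_subtype]
      rintro _ ⟨w, -, rfl⟩
      exact w.2
    · rintro ⟨hT, hvT⟩
      have hsub : ∀ x ∈ T.erase v, x ∈ G.neighborSet v := fun x hx =>
        hT.isClique (Finset.mem_coe.mpr hvT) (Finset.mem_of_mem_erase hx)
          (Finset.ne_of_mem_erase hx).symm
      refine ⟨(T.erase v).subtype (· ∈ G.neighborSet v), ?_, ?_⟩
      · rw [mem_cliqueSet_iff, isNClique_induce_iff, Finset.subtype_map_of_mem hsub]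
        exact hT.erase_of_mem hvT
      · simp only [hcone, Finset.subtype_map_of_mem hsub, Finset.insert_erase hvT]
  have hinj : Function.Injective cone := fun s t hst => by
    have := congrArg (Finset.erase · v) hst
    simpa [hcone, Finset.erase_insert (hv _)] using this
  rw [← himage, Set.ncard_image_of_injective _ hinj]

theorem succ_mul_ncard_cliqueSet_succ_s15 [Finite α] {n B : ℕ}
    (hB : ∀ v, {T | G.IsNClique (n + 1) T ∧ v ∈ T}.ncard = B) :
    (n + 1) * (G.cliqueSet (n + 1)).ncard = Nat.card α * B := by
  classical
  have := Fintype.ofFinite α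
  have h := Finset.card_mul_eq_card_mul (fun T v => v ∈ T) (s := G.cliqueFinset (n + 1))
    (t := Finset.univ) (m := n + 1) (n := B) ?_ ?_
  · rw [← coe_cliqueFinset, Set.ncard_coe_finset, Nat.card_eq_fintype_card, mul_comm, h,
      Finset.card_univ]
  · intro T hT
    simpa [Finset.bipartiteAbove] using (mem_cliqueFinset_iff.mp hT).card_eq
  · intro v _
    rw [← hB v, ← Set.ncard_coe_finset]
    congr 1
    ext T
    simp [Finset.bipartiteBelow]

theorem succ_mul_ncard_cliqueSet_succ_of_forall_exists_iso [Finite α] (v₀ : α)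
    (htrans : ∀ v, ∃ φ : G ≃g G, φ v₀ = v) (n : ℕ) :
    (n + 1) * (G.cliqueSet (n + 1)).ncard
      = Nat.card α * ((G.induce (G.neighborSet v₀)).cliqueSet n).ncard := by
  refine succ_mul_ncard_cliqueSet_succ_s15 fun v => ?_
  obtain ⟨φ, rfl⟩ := htrans v
  rw [ncard_setOf_isNClique_succ_mem, (φ.induceNeighborSet v₀).ncard_cliqueSet_eq]

end SimpleGraph

def kthPowers (F : Type*) [Field F] (k : ℕ) : Set F := {a | ∃ c : F, c ≠ 0 ∧ c ^ k = a}

namespace kthPowers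

variable {F : Type*} [Field F] {k : ℕ} {a x : F}

theorem one_mem : (1 : F) ∈ kthPowers F k := ⟨1, one_ne_zero, one_pow k⟩

theorem ne_zero (ha : a ∈ kthPowers F k) : a ≠ 0 := by
  obtain ⟨c, hc, rfl⟩ := ha
  exact pow_ne_zero k hc

theorem mul_mem_iff (ha : a ∈ kthPowers F k) :
    a * x ∈ kthPowers F k ↔ x ∈ kthPowers F k := by
  obtain ⟨c, hc, rfl⟩ := ha
  constructor
  · rintro ⟨d, hd, hdx⟩
    refine ⟨d / c, div_ne_zero hd hc, ?_⟩
    rw [div_pow, hdx, mul_div_cancel_left₀ _ (pow_ne_zero k hc)]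
  · rintro ⟨d, hd, rfl⟩
    exact ⟨c * d, mul_ne_zero hc hd, mul_pow c d k⟩

theorem eq_image_range_powMonoidHom :
    kthPowers F k = Units.val '' ((powMonoidHom k : Fˣ →* Fˣ).range : Set Fˣ) := by
  ext a
  constructor
  · rintro ⟨c, hc, rfl⟩
    exact ⟨Units.mk0 c hc ^ k, ⟨Units.mk0 c hc, rfl⟩, by simp⟩
  · rintro ⟨_, ⟨u, rfl⟩, rfl⟩
    exact ⟨u, u.ne_zero, by simp⟩

theorem ncard_mul [Fintype F] (hk : k ∣ Fintype.card F - 1) :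
    (kthPowers F k).ncard * k = Fintype.card F - 1 := by
  have hunits : Nat.card Fˣ = Fintype.card F - 1 := by
    rw [Nat.card_units, Nat.card_eq_fintype_card]
  have hindex : (powMonoidHom k : Fˣ →* Fˣ).range.index = k := by
    rw [IsCyclic.index_powMonoidHom_range, Nat.gcd_eq_right (hunits ▸ hk)]
  rw [eq_image_range_powMonoidHom, Set.ncard_image_of_injective _ Units.val_injective,
    ← Nat.card_coe_set_eq, SetLike.coe_sort_coe, ← hunits,
    ← (powMonoidHom k : Fˣ →* Fˣ).range.card_mul_index, hindex]

end kthPowers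

section

variable {F : Type*} [Field F] {k : ℕ} {G : SimpleGraph F}

def mulLeftIso (hG : ∀ a b, G.Adj a b ↔ a ≠ b ∧ a - b ∈ kthPowers F k) {a : F}
    (ha : a ∈ kthPowers F k) : G ≃g G where
  toEquiv := Equiv.mulLeft₀ a (kthPowers.ne_zero ha)
  map_rel_iff' {x y} := by
    simp only [Equiv.mulLeft₀_apply, hG, ← mul_sub, kthPowers.mul_mem_iff ha,
      (mul_right_injective₀ (kthPowers.ne_zero ha)).ne_iff]

theorem exists_iso_induce_kthPowers_apply_one
    (hG : ∀ a b, G.Adj a b ↔ a ≠ b ∧ a - b ∈ kthPowers F k) (v : kthPowers F k) :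
    ∃ φ : G.induce (kthPowers F k) ≃g G.induce (kthPowers F k),
      φ ⟨1, kthPowers.one_mem⟩ = v :=
  ⟨(mulLeftIso hG v.2).induce
      ((mulLeftIso hG v.2).toEquiv.bijOn fun _ => kthPowers.mul_mem_iff v.2),
    Subtype.ext (mul_one _)⟩

end

theorem genPaley_H_H1_clique_count_relation_general {F : Type*} [Field F] [Fintype F]
    (k : ℕ)
    (heven : Even (Fintype.card F) → Fintype.card F % k = 1)
    (hodd : Odd (Fintype.card F) → Fintype.card F % (2 * k) = 1)
    (G : SimpleGraph F)
    (hG : ∀ a b : F, G.Adj a b ↔ a ≠ b ∧ ∃ c : F, c ≠ 0 ∧ c ^ k = a - b)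
    (n : ℕ) :
    ∀ H : SimpleGraph {a : F | ∃ c : F, c ≠ 0 ∧ c ^ k = a},
      H = G.induce {a : F | ∃ c : F, c ≠ 0 ∧ c ^ k = a} →
      ((H.cliqueSet (n + 1)).ncard : ℚ)
        = ((Fintype.card F : ℚ) - 1) / (k * (n + 1)) *
            ((H.induce (H.neighborSet ⟨1, 1, one_ne_zero, one_pow k⟩)).cliqueSet n).ncard := by
  rintro _ rfl
  have hdvd : k ∣ Fintype.card F - 1 := by
    rcases Nat.even_or_odd (Fintype.card F) with he | ho
    · simpa [heven he] using Nat.dvd_sub_mod (n := k) (Fintype.card F)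
    · exact (Dvd.intro_left 2 rfl).trans
        (by simpa [hodd ho] using Nat.dvd_sub_mod (n := 2 * k) (Fintype.card F))
  have hcard := kthPowers.ncard_mul hdvd
  have hk : k ≠ 0 := by
    rintro rfl
    have := Fintype.one_lt_card (α := F)
    omega
  have hcount := SimpleGraph.succ_mul_ncard_cliqueSet_succ_of_forall_exists_iso
    (G := G.induce (kthPowers F k)) ⟨1, kthPowers.one_mem⟩
    (exists_iso_induce_kthPowers_apply_one hG) n
  rw [Nat.card_coe_set_eq] at hcount
  have hq : (Fintype.card F : ℚ) - 1 = (kthPowers F k).ncard * k := by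
    rw [← Nat.cast_pred Fintype.card_pos, ← hcard, Nat.cast_mul]
  rw [hq]
  field_simp
  rw [mul_comm]
  exact_mod_cast hcount

theorem genPaley_H_H1_clique_count_relation {F : Type*} [Field F] [Fintype F]
    (k : ℕ) (hk : 2 ≤ k)
    (heven : Even (Fintype.card F) → Fintype.card F % k = 1)
    (hodd : Odd (Fintype.card F) → Fintype.card F % (2 * k) = 1)
    (G : SimpleGraph F)
    (hG : ∀ a b : F, G.Adj a b ↔ a ≠ b ∧ ∃ c : F, c ≠ 0 ∧ c ^ k = a - b)
    (n : ℕ) (hn : 0 < n) :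
    ∀ H : SimpleGraph {a : F | ∃ c : F, c ≠ 0 ∧ c ^ k = a},
      H = G.induce {a : F | ∃ c : F, c ≠ 0 ∧ c ^ k = a} →
      ((H.cliqueSet (n + 1)).ncard : ℚ)
        = ((Fintype.card F : ℚ) - 1) / (k * (n + 1)) *
            ((H.induce (H.neighborSet ⟨1, 1, one_ne_zero, one_pow k⟩)).cliqueSet n).ncard :=
  genPaley_H_H1_clique_count_relation_general k heven hodd G hG n
end

section
/- Let k ≥ 2 and q be a prime power with q ≡ 1 (mod k) if q even, q ≡ 1 (mod 2k) if q odd. Then the number of triangles (complete subgraphs of order 3) in the generalized Paley graph G_k(q) equals (q(q-1)/(6k³))·(R_k(q) + q - 3k + 1), where R_k(q) := Σ_{s,t=1, s+t ≢ 0 (mod k)}^{k-1} J(χ_k^s, χ_k^t) for χ_k a character of F_q* of order k. -/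
/-!
Put `I x = ∑_{j < k} χ^j x`; it is `k` on the kernel of `χ`, which is the set `S_k` of nonzero
`k`-th powers, and `0` elsewhere. Hence `k³` times the number of ordered triangles is
`∑_{a,b,c} I(a-b) I(b-c) I(a-c)`. Translating by `c`, then substituting `x = u y` for `y ∈ S_k`
(which leaves `I` invariant), turns this into `q (q-1) ∑_u I(u) I(1-u)`, and expanding `I` gives
`q (q-1) ∑_{a,b<k} J(χ^a, χ^b)`; replacing `u - 1` by `1 - u` needs `-1 ∈ S_k`. The Jacobi sums
involving the trivial character, and those of the pairs `χ^a, χ^{-a}`, are `q-2` or `-1`; they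
account for the term `q - 3k + 1`. An unordered triangle is counted `6` times.
-/

open Finset

lemma Finset.range_eq_insert_zero_Icc_one {k : ℕ} (hk : 0 < k) :
    range k = insert 0 (Icc 1 (k - 1)) := by
  ext b
  simp only [mem_range, mem_insert, mem_Icc]
  omega

lemma Finset.filter_dvd_add_Icc_eq_singleton {k a : ℕ} (ha0 : 0 < a) (ha : a < k) :
    {b ∈ Icc 1 (k - 1) | k ∣ a + b} = {k - a} := by
  ext b
  simp only [mem_filter, mem_Icc, mem_singleton]
  constructor
  · rintro ⟨hb, hdvd⟩
    have := Nat.eq_of_dvd_of_lt_two_mul (by omega) hdvd (by omega)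
    omega
  · rintro rfl
    exact ⟨by omega, by rw [Nat.add_sub_cancel' ha.le]⟩

lemma Finset.card_filter_pairwise_ne_triple {α : Type*} [DecidableEq α] (s : Finset α) :
    #{p ∈ s ×ˢ s ×ˢ s | p.1 ≠ p.2.1 ∧ p.2.1 ≠ p.2.2 ∧ p.1 ≠ p.2.2} =
      #s * ((#s - 1) * (#s - 2)) := by
  rw [card_filter, sum_product]
  have hrow (a : α) :
      ∑ q ∈ s ×ˢ s, (if a ≠ q.1 ∧ q.1 ≠ q.2 ∧ a ≠ q.2 then 1 else 0) = #(s.erase a).offDiag := by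
    rw [← card_filter]
    congr 1
    ext ⟨b, c⟩
    simp only [mem_filter, mem_product, mem_offDiag, mem_erase]
    tauto
  rw [sum_congr rfl fun a _ ↦ hrow a, sum_const_nat fun a ha ↦ by rw [offDiag_card, card_erase_of_mem ha],
    ← Nat.mul_sub_one, Nat.sub_sub]

lemma Fintype.sum_sum_sum_sub {A M : Type*} [AddCommGroup A] [Fintype A] [AddCommMonoid M]
    (f : A → A → A → M) :
    ∑ a, ∑ b, ∑ c, f (a - b) (b - c) (a - c) = Fintype.card A • ∑ x, ∑ y, f (x - y) y x := by
  have htranslate (c : A) : ∑ a, ∑ b, f (a - b) (b - c) (a - c) = ∑ x, ∑ y, f (x - y) y x := by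
    rw [← Equiv.sum_comp (Equiv.addRight c)]
    refine Finset.sum_congr rfl fun x _ ↦ ?_
    rw [← Equiv.sum_comp (Equiv.addRight c)]
    simp only [Equiv.coe_addRight, add_sub_add_right_eq_sub, add_sub_cancel_right]
  rw [← Fintype.sum_prod_type', Finset.sum_comm]
  simp only [Fintype.sum_prod_type, htranslate, sum_const, card_univ]

namespace SimpleGraph

variable {V : Type*} [Fintype V] [DecidableEq V] (G : SimpleGraph V) [DecidableRel G.Adj]

lemma card_adj_triples_eq_six_mul_card_cliqueFinset_three :
    #{p : V × V × V | G.Adj p.1 p.2.1 ∧ G.Adj p.2.1 p.2.2 ∧ G.Adj p.1 p.2.2} =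
      6 * #(G.cliqueFinset 3) := by
  rw [card_eq_sum_card_fiberwise (f := fun p ↦ ({p.1, p.2.1, p.2.2} : Finset V))
    (t := G.cliqueFinset 3) fun p hp ↦ ?maps, mul_comm, ← smul_eq_mul, ← sum_const]
  case maps =>
    simp only [coe_filter, mem_univ, true_and, Set.mem_ofPred_eq, coe_cliqueFinset] at hp ⊢
    exact is3Clique_triple_iff.mpr ⟨hp.1, hp.2.2, hp.2.1⟩
  refine sum_congr rfl fun s hs ↦ ?_
  rw [mem_cliqueFinset_iff] at hs
  have h6 : #s * ((#s - 1) * (#s - 2)) = 6 := by rw [hs.card_eq]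
  rw [filter_filter, ← h6, ← card_filter_pairwise_ne_triple]
  congr 1
  ext ⟨a, b, c⟩
  simp only [mem_filter, mem_univ, true_and, mem_product]
  constructor
  · rintro ⟨⟨hab, hbc, hac⟩, rfl⟩
    simp [hab.ne, hbc.ne, hac.ne]
  · rintro ⟨⟨ha, hb, hc⟩, hab, hbc, hac⟩
    refine ⟨⟨hs.1 ha hb hab, hs.1 hb hc hbc, hs.1 ha hc hac⟩, ?_⟩
    refine eq_of_subset_of_card_le (by simp [insert_subset_iff, ha, hb, hc]) ?_
    rw [hs.card_eq, card_eq_three.mpr ⟨a, b, c, hab, hac, hbc, rfl⟩]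

end SimpleGraph

lemma FiniteField.exists_pow_eq_neg_one {F : Type*} [Field F] [Fintype F] {k : ℕ}
    (hodd : Odd (Fintype.card F) → Fintype.card F % (2 * k) = 1) :
    ∃ c : F, c ≠ 0 ∧ c ^ k = -1 := by
  rcases Nat.even_or_odd (Fintype.card F) with heven | hodd'
  · have hF : ringChar F = 2 := even_card_iff_char_two.mpr (Nat.even_iff.mp heven)
    exact ⟨1, one_ne_zero, by rw [one_pow, neg_one_eq_one_iff.mpr hF]⟩
  have hF : ringChar F ≠ 2 := fun h ↦
    Nat.not_even_iff_odd.mpr hodd' (Nat.even_iff.mpr (even_card_iff_char_two.mp h))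
  obtain ⟨a, ha⟩ := exists_nonsquare hF
  have ha0 : a ≠ 0 := by rintro rfl; exact ha IsSquare.zero
  obtain ⟨t, ht⟩ : ∃ t, Fintype.card F = 2 * (t * k) + 1 := by
    refine ⟨Fintype.card F / (2 * k), ?_⟩
    have := Nat.div_add_mod (Fintype.card F) (2 * k)
    rw [hodd hodd'] at this
    linarith
  have hq : Fintype.card F / 2 = t * k := by omega
  refine ⟨a ^ t, pow_ne_zero _ ha0, ?_⟩
  rw [← pow_mul, ← hq]
  exact (pow_dichotomy hF ha0).resolve_left fun h ↦ ha ((isSquare_iff hF ha0).mpr h)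

namespace MulChar

section Kernel

variable {F R : Type*} [Field F] [Fintype F] [CommRing R] (χ : MulChar F R)

lemma apply_pow_orderOf {c : F} (hc : c ≠ 0) : χ (c ^ orderOf χ) = 1 := by
  rw [map_pow, ← χ.pow_apply' χ.orderOf_pos.ne', pow_orderOf_eq_one, one_apply hc.isUnit]

lemma apply_eq_one_iff_exists_pow [Nontrivial R] (x : F) :
    χ x = 1 ↔ ∃ c : F, c ≠ 0 ∧ c ^ orderOf χ = x := by
  refine ⟨fun h ↦ ?_, fun ⟨c, hc, hcx⟩ ↦ hcx ▸ χ.apply_pow_orderOf hc⟩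
  have hx : x ≠ 0 := by rintro rfl; simp at h
  obtain ⟨g, hg⟩ := IsCyclic.exists_generator (α := Fˣ)
  have hord : orderOf (χ g) = orderOf χ := orderOf_eq_orderOf_iff.mpr fun n ↦ by
    rw [eq_iff hg (χ ^ n) 1, pow_apply_coe, one_apply_coe]
  obtain ⟨m, hm : g ^ m = Units.mk0 x hx⟩ : Units.mk0 x hx ∈ Submonoid.powers g :=
    mem_powers_iff_mem_zpowers.mpr (hg _)
  have hm' : χ g ^ m = 1 := by
    rw [← h, ← Units.val_mk0 hx, ← hm, Units.val_pow_eq_pow_val, map_pow]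
  obtain ⟨d, rfl⟩ := hord ▸ orderOf_dvd_of_pow_eq_one hm'
  refine ⟨(g ^ d : Fˣ), Units.ne_zero _, ?_⟩
  rw [← Units.val_pow_eq_pow_val, ← pow_mul, mul_comm, hm, Units.val_mk0]

end Kernel

section JacobiSum

variable {F R : Type*} [Field F] [Fintype F] [CommRing R] [IsDomain R] {χ : MulChar F R}

lemma jacobiSum_pow_one {a : ℕ} (ha0 : 0 < a) (ha : a < orderOf χ) :
    jacobiSum (χ ^ a) 1 = -1 := by
  rw [jacobiSum_comm, jacobiSum_one_nontrivial (pow_ne_one_of_lt_orderOf ha0.ne' ha)]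

lemma jacobiSum_pow_pow_orderOf_sub (hχ : χ (-1) = 1) {a : ℕ} (ha0 : 0 < a)
    (ha : a < orderOf χ) : jacobiSum (χ ^ a) (χ ^ (orderOf χ - a)) = -1 := by
  have hinv : χ ^ (orderOf χ - a) = (χ ^ a)⁻¹ := by
    rw [pow_sub χ ha.le, pow_orderOf_eq_one, one_mul]
  rw [hinv, jacobiSum_nontrivial_inv (pow_ne_one_of_lt_orderOf ha0.ne' ha),
    pow_apply' χ ha0.ne', hχ, one_pow]

lemma sum_range_jacobiSum_one_pow :
    ∑ b ∈ range (orderOf χ), jacobiSum 1 (χ ^ b) = Fintype.card F - 1 - orderOf χ := by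
  rw [range_eq_insert_zero_Icc_one χ.orderOf_pos, sum_insert (by simp), pow_zero,
    jacobiSum_one_one, sum_congr rfl fun b hb ↦ by
      rw [jacobiSum_comm, jacobiSum_pow_one (mem_Icc.mp hb).1 (by grind)]]
  simp only [sum_const, Nat.card_Icc, add_tsub_cancel_right, nsmul_eq_mul,
    Nat.cast_sub χ.orderOf_pos, Nat.cast_one]
  ring

lemma sum_range_jacobiSum_pow (hχ : χ (-1) = 1) {a : ℕ} (ha0 : 0 < a) (ha : a < orderOf χ) :
    ∑ b ∈ range (orderOf χ), jacobiSum (χ ^ a) (χ ^ b) =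
      ∑ b ∈ Icc 1 (orderOf χ - 1) with ¬ orderOf χ ∣ a + b, jacobiSum (χ ^ a) (χ ^ b) - 2 := by
  rw [range_eq_insert_zero_Icc_one χ.orderOf_pos, sum_insert (by simp), pow_zero,
    jacobiSum_pow_one ha0 ha, ← sum_filter_not_add_sum_filter _ (orderOf χ ∣ a + ·),
    filter_dvd_add_Icc_eq_singleton ha0 ha, sum_singleton,
    jacobiSum_pow_pow_orderOf_sub hχ ha0 ha]
  ring

lemma sum_range_sum_range_jacobiSum_pow (hχ : χ (-1) = 1) :
    ∑ a ∈ range (orderOf χ), ∑ b ∈ range (orderOf χ), jacobiSum (χ ^ a) (χ ^ b) =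
      (∑ s ∈ Icc 1 (orderOf χ - 1),
          ∑ t ∈ (Icc 1 (orderOf χ - 1)).filter (fun t => ¬ orderOf χ ∣ s + t),
            jacobiSum (χ ^ s) (χ ^ t)) + Fintype.card F - 3 * orderOf χ + 1 := by
  rw [range_eq_insert_zero_Icc_one χ.orderOf_pos, sum_insert (by simp), pow_zero,
    ← range_eq_insert_zero_Icc_one χ.orderOf_pos, sum_range_jacobiSum_one_pow,
    sum_congr rfl fun a ha ↦ sum_range_jacobiSum_pow hχ (mem_Icc.mp ha).1 (by grind)]
  simp only [sum_sub_distrib, sum_const, Nat.card_Icc, add_tsub_cancel_right, nsmul_eq_mul,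
    Nat.cast_sub χ.orderOf_pos, Nat.cast_one]
  ring

end JacobiSum

section SumPow

variable {F R : Type*} [Field F] [CommRing R] (χ : MulChar F R)

noncomputable def sumPow (x : F) : R := ∑ j ∈ range (orderOf χ), (χ ^ j) x

lemma sum_sumPow_mul_sumPow_one_sub [Fintype F] :
    ∑ u, χ.sumPow u * χ.sumPow (1 - u) =
      ∑ a ∈ range (orderOf χ), ∑ b ∈ range (orderOf χ), jacobiSum (χ ^ a) (χ ^ b) := by
  simp only [sumPow, sum_mul_sum]
  rw [Finset.sum_comm]
  refine sum_congr rfl fun a _ ↦ ?_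
  rw [Finset.sum_comm]
  rfl

variable [IsDomain R] {χ}

lemma sumPow_of_apply_eq_one {x : F} (hx : χ x = 1) : χ.sumPow x = orderOf χ := by
  have hx0 : x ≠ 0 := by rintro rfl; simp at hx
  have hpow (j : ℕ) : (χ ^ j) x = χ x ^ j := pow_apply_coe χ j (Units.mk0 x hx0)
  simp [sumPow, hpow, hx]

lemma sumPow_of_apply_ne_one {x : F} (hx : χ x ≠ 1) : χ.sumPow x = 0 := by
  rcases eq_or_ne x 0 with rfl | hx0
  · simp [sumPow]
  have hpow (j : ℕ) : (χ ^ j) x = χ x ^ j := pow_apply_coe χ j (Units.mk0 x hx0)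
  have hk : χ x ^ orderOf χ = 1 := by rw [← hpow, pow_orderOf_eq_one, one_apply hx0.isUnit]
  have hgeom := geom_sum_mul (χ x) (orderOf χ)
  rw [hk, sub_self] at hgeom
  simp only [sumPow, hpow]
  exact (mul_eq_zero.mp hgeom).resolve_right (sub_ne_zero.mpr hx)

lemma sumPow_mul_of_apply_eq_one {y : F} (hy : χ y = 1) (x : F) :
    χ.sumPow (x * y) = χ.sumPow x := by
  by_cases hx : χ x = 1
  · rw [sumPow_of_apply_eq_one hx, sumPow_of_apply_eq_one (by rw [map_mul, hx, hy, one_mul])]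
  · rw [sumPow_of_apply_ne_one hx, sumPow_of_apply_ne_one (by rwa [map_mul, hy, mul_one])]

lemma sumPow_neg (hχ : χ (-1) = 1) (x : F) : χ.sumPow (-x) = χ.sumPow x := by
  rw [← mul_neg_one, sumPow_mul_of_apply_eq_one hχ]

variable [Fintype F] (χ)

lemma sum_sumPow [DecidableEq F] : ∑ x, χ.sumPow x = Fintype.card F - 1 := by
  simp only [sumPow]
  rw [Finset.sum_comm, Finset.sum_eq_single_of_mem 0 (mem_range.mpr χ.orderOf_pos)]
  · rw [pow_zero, sum_one_eq_card_units, Fintype.card_units, Nat.cast_sub Fintype.card_pos,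
      Nat.cast_one]
  · intro j hj hj0
    exact sum_eq_zero_of_ne_one (pow_ne_one_of_lt_orderOf hj0 (mem_range.mp hj))

lemma sum_sum_sumPow_sub_mul_sumPow_mul_sumPow [DecidableEq F] (hχ : χ (-1) = 1) :
    ∑ x, ∑ y, χ.sumPow (x - y) * χ.sumPow y * χ.sumPow x =
      (Fintype.card F - 1) * ∑ u, χ.sumPow u * χ.sumPow (1 - u) := by
  have hfiber (y : F) : ∑ x, χ.sumPow (x - y) * χ.sumPow y * χ.sumPow x =
      χ.sumPow y * ∑ u, χ.sumPow u * χ.sumPow (1 - u) := by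
    by_cases hy : χ y = 1
    · have hy0 : y ≠ 0 := by rintro rfl; simp at hy
      rw [← Equiv.sum_comp (Equiv.mulRight₀ y hy0), mul_sum]
      refine sum_congr rfl fun u _ ↦ ?_
      rw [Equiv.mulRight₀_apply, ← sub_one_mul, sumPow_mul_of_apply_eq_one hy,
        sumPow_mul_of_apply_eq_one hy, ← sumPow_neg hχ (u - 1), neg_sub]
      ring
    · simp [sumPow_of_apply_ne_one hy]
  rw [Finset.sum_comm, sum_congr rfl fun y _ ↦ hfiber y, ← sum_mul, sum_sumPow]

lemma sum_sumPow_mul_eq_card_adj_triples (G : SimpleGraph F) [DecidableRel G.Adj]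
    (hG : ∀ a b, G.Adj a b ↔ χ (a - b) = 1) :
    ∑ a, ∑ b, ∑ c, χ.sumPow (a - b) * χ.sumPow (b - c) * χ.sumPow (a - c) =
      orderOf χ ^ 3 * #{p : F × F × F | G.Adj p.1 p.2.1 ∧ G.Adj p.2.1 p.2.2 ∧ G.Adj p.1 p.2.2} := by
  have hterm (a b : F) : χ.sumPow (a - b) = if G.Adj a b then (orderOf χ : R) else 0 := by
    split_ifs with h
    · exact sumPow_of_apply_eq_one ((hG a b).mp h)
    · exact sumPow_of_apply_ne_one (mt (hG a b).mpr h)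
  simp only [hterm, card_filter, Nat.cast_sum, mul_sum, ← Fintype.sum_prod_type']
  refine sum_congr rfl fun p _ ↦ ?_
  split_ifs <;> simp_all [pow_three, mul_assoc]

end SumPow

end MulChar

theorem genPaley_triangle_count_general {F : Type*} [Field F] [Fintype F]
    (k : ℕ)
    (hodd : Odd (Fintype.card F) → Fintype.card F % (2 * k) = 1)
    (G : SimpleGraph F)
    (hG : ∀ a b : F, G.Adj a b ↔ a ≠ b ∧ ∃ c : F, c ≠ 0 ∧ c ^ k = a - b)
    (χ : MulChar F ℂ) (hord : orderOf χ = k) :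
    ((G.cliqueSet 3).ncard : ℂ)
      = (Fintype.card F : ℂ) * ((Fintype.card F : ℂ) - 1) / (6 * (k : ℂ) ^ 3) *
          ((∑ s ∈ Finset.Icc 1 (k - 1),
              ∑ t ∈ (Finset.Icc 1 (k - 1)).filter (fun t => ¬ k ∣ s + t),
                jacobiSum (χ ^ s) (χ ^ t))
            + (Fintype.card F : ℂ) - 3 * (k : ℂ) + 1) := by
  classical
  subst hord
  have hχ : χ (-1) = 1 := by
    obtain ⟨c, hc, hck⟩ := FiniteField.exists_pow_eq_neg_one hodd
    exact hck ▸ χ.apply_pow_orderOf hc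
  have hAdj (a b : F) : G.Adj a b ↔ χ (a - b) = 1 := by
    rw [hG, ← χ.apply_eq_one_iff_exists_pow, and_iff_right_iff_imp]
    rintro h rfl
    rw [sub_self, MulChar.map_zero] at h
    exact zero_ne_one h
  have hcount : (orderOf χ : ℂ) ^ 3 * (6 * (G.cliqueSet 3).ncard) =
      Fintype.card F * (Fintype.card F - 1) * ((∑ s ∈ Finset.Icc 1 (orderOf χ - 1),
          ∑ t ∈ (Finset.Icc 1 (orderOf χ - 1)).filter (fun t => ¬ orderOf χ ∣ s + t),
            jacobiSum (χ ^ s) (χ ^ t)) + Fintype.card F - 3 * orderOf χ + 1) := by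
    rw [← SimpleGraph.coe_cliqueFinset, Set.ncard_coe_finset, ← Nat.cast_ofNat (R := ℂ) (n := 6),
      ← Nat.cast_mul, ← G.card_adj_triples_eq_six_mul_card_cliqueFinset_three,
      ← χ.sum_sumPow_mul_eq_card_adj_triples G hAdj,
      Fintype.sum_sum_sum_sub fun u v w ↦ χ.sumPow u * χ.sumPow v * χ.sumPow w,
      χ.sum_sum_sumPow_sub_mul_sumPow_mul_sumPow hχ, χ.sum_sumPow_mul_sumPow_one_sub,
      MulChar.sum_range_sum_range_jacobiSum_pow hχ, nsmul_eq_mul, mul_assoc]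
  rw [div_mul_eq_mul_div, eq_div_iff (by simp [χ.orderOf_pos.ne'])]
  linear_combination hcount

theorem genPaley_triangle_count {F : Type*} [Field F] [Fintype F]
    (k : ℕ) (hk : 2 ≤ k)
    (heven : Even (Fintype.card F) → Fintype.card F % k = 1)
    (hodd : Odd (Fintype.card F) → Fintype.card F % (2 * k) = 1)
    (G : SimpleGraph F)
    (hG : ∀ a b : F, G.Adj a b ↔ a ≠ b ∧ ∃ c : F, c ≠ 0 ∧ c ^ k = a - b)
    (χ : MulChar F ℂ) (hord : orderOf χ = k) :
    ((G.cliqueSet 3).ncard : ℂ)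
      = (Fintype.card F : ℂ) * ((Fintype.card F : ℂ) - 1) / (6 * (k : ℂ) ^ 3) *
          ((∑ s ∈ Finset.Icc 1 (k - 1),
              ∑ t ∈ (Finset.Icc 1 (k - 1)).filter (fun t => ¬ k ∣ s + t),
                jacobiSum (χ ^ s) (χ ^ t))
            + (Fintype.card F : ℂ) - 3 * (k : ℂ) + 1) :=
  genPaley_triangle_count_general k hodd G hG χ hord
end

section
/- For each integer k ≥ 2, the set X_k := {(t₁,t₂,t₃,t₄,t₅) ∈ (Z/kZ)⁵ : t₁,t₂,t₃ ∉ {0, t₄, t₅} and t₁+t₂+t₃ ≠ t₄+t₅} has cardinality (k-1)(k⁴ - 9k³ + 36k² - 69k + 51). -/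
/-!
Fix `(t₄, t₅) = (a, b)`, put `F = {0, a, b}`, `f = #F`, `m = #Fᶜ`, and let `N(A, B, C)` count the
solutions of `x + y + z = a + b` with `x ∈ A`, `y ∈ B`, `z ∈ C`. Since `N(A, B, Cᶜ) = #A #B - N(A, B, C)`
and `N` is invariant under rotating its arguments, `N(Fᶜ, Fᶜ, Fᶜ) = m² - mf + f² - N(F, F, F)`; so the
fibre over `(a, b)` has `m³ - m² + mf - f² + N(F, F, F)` points. Both `f` and `N(F, F, F)` are affine
combinations of the indicators of `a = 0`, `b = 0`, `a = b`, `a = b = 0`, `a + b = 0`, `b = 2a`,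
`a = 2b`, each of which sums to `#V` (or to `1` for `a = b = 0`) over all `(a, b)`. Hence the total
is a polynomial in `#V` for every finite abelian group `V`, although single fibres depend on its
2-torsion.
-/

open Finset

variable {V : Type*} [AddCommGroup V] [DecidableEq V]

def tripleSumCount (A B C : Finset V) (s : V) : ℕ :=
  #{p ∈ A ×ˢ B ×ˢ C | p.1 + p.2.1 + p.2.2 = s}

theorem tripleSumCount_rotate (A B C : Finset V) (s : V) :
    tripleSumCount A B C s = tripleSumCount B C A s := by
  refine card_nbij' (fun p => (p.2.1, p.2.2, p.1)) (fun p => (p.2.2, p.1, p.2.1))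
    ?_ ?_ (fun _ _ => rfl) (fun _ _ => rfl)
  · rintro ⟨x, y, z⟩ h
    simp only [coe_filter, mem_product, Set.mem_ofPred_eq] at h ⊢
    exact ⟨⟨h.1.2.1, h.1.2.2, h.1.1⟩, by rw [← h.2]; abel⟩
  · rintro ⟨x, y, z⟩ h
    simp only [coe_filter, mem_product, Set.mem_ofPred_eq] at h ⊢
    exact ⟨⟨h.1.2.2, h.1.1, h.1.2.1⟩, by rw [← h.2]; abel⟩

theorem tripleSumCount_eq_card_filter (A B C : Finset V) (s : V) :
    tripleSumCount A B C s = #{q ∈ A ×ˢ B | s - q.1 - q.2 ∈ C} := by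
  refine card_nbij' (fun p => (p.1, p.2.1)) (fun q => (q.1, q.2, s - q.1 - q.2))
    ?_ ?_ ?_ (fun _ _ => rfl)
  · rintro ⟨x, y, z⟩ h
    simp only [coe_filter, mem_product, Set.mem_ofPred_eq] at h ⊢
    refine ⟨⟨h.1.1, h.1.2.1⟩, ?_⟩
    rw [← h.2]; simpa [sub_sub, add_assoc] using h.1.2.2
  · rintro ⟨x, y⟩ h
    simp only [coe_filter, mem_product, Set.mem_ofPred_eq] at h ⊢
    exact ⟨⟨h.1.1, h.1.2, h.2⟩, by abel⟩
  · rintro ⟨x, y, z⟩ h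
    simp only [coe_filter, mem_product, Set.mem_ofPred_eq] at h
    simp [← h.2, add_assoc]

theorem tripleSumCount_eq_sum (A B C : Finset V) (s : V) :
    (tripleSumCount A B C s : ℤ)
      = ∑ x ∈ A, ∑ y ∈ B, ∑ z ∈ C, if x + y + z = s then 1 else 0 := by
  rw [tripleSumCount, card_filter, sum_product, Nat.cast_sum]
  simp only [sum_product, Nat.cast_sum, Nat.cast_ite, Nat.cast_one, Nat.cast_zero]

theorem tripleSumCount_singleton_zero : (tripleSumCount {0} {0} {0} (0 : V) : ℤ) = 1 := by
  rw [tripleSumCount_eq_sum]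
  simp only [sum_singleton]
  simp

theorem tripleSumCount_zero_pair (c : V) (hc : c ≠ 0) :
    (tripleSumCount {0, c} {0, c} {0, c} c : ℤ) = 3 + if c + c = 0 then 1 else 0 := by
  have h0 : (0 : V) ∉ ({c} : Finset V) := by simpa using hc.symm
  rw [tripleSumCount_eq_sum]
  simp only [sum_insert h0, sum_singleton]
  simp only [add_zero, zero_add, eq_comm (a := (0 : V)), hc, ↓reduceIte, add_eq_left,
    add_assoc]
  ring

theorem tripleSumCount_zero_pair_add_self (c : V) (hc : c ≠ 0) :
    (tripleSumCount {0, c} {0, c} {0, c} (c + c) : ℤ) = 3 + if c + c = 0 then 1 else 0 := by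
  have h0 : (0 : V) ∉ ({c} : Finset V) := by simpa using hc.symm
  rw [tripleSumCount_eq_sum]
  simp only [sum_insert h0, sum_singleton]
  simp only [add_zero, zero_add, eq_comm (a := (0 : V)), left_eq_add, hc, ↓reduceIte,
    add_assoc, add_eq_right]
  ring

theorem tripleSumCount_zero_triple (a b : V) (ha : a ≠ 0) (hb : b ≠ 0) (hab : a ≠ b) :
    (tripleSumCount {0, a, b} {0, a, b} {0, a, b} (a + b) : ℤ)
      = 6 + (if a + b = 0 then 1 else 0) + (if b = a + a then 1 else 0)
        + (if a = b + b then 1 else 0) := by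
  have h0 : (0 : V) ∉ ({a, b} : Finset V) := by simp [ha.symm, hb.symm]
  have h1 : a ∉ ({b} : Finset V) := by simpa using hab
  have h3b : b + (b + b) = a + b ↔ a = b + b := by rw [add_comm a b, add_right_inj, eq_comm]
  rw [tripleSumCount_eq_sum]
  simp only [sum_insert h0, sum_insert h1, sum_singleton]
  simp [hab, ha, hb, hab.symm, add_comm b a, eq_comm (a := b), eq_comm (a := (0 : V)),
    add_assoc, h3b]
  ring

variable [Fintype V]

theorem tripleSumCount_compl_add (A B C : Finset V) (s : V) :
    tripleSumCount A B Cᶜ s + tripleSumCount A B C s = #A * #B := by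
  simp only [tripleSumCount_eq_card_filter, mem_compl, ← card_product]
  rw [add_comm, card_filter_add_card_filter_not]

theorem tripleSumCount_compl_compl_compl (F : Finset V) (s : V) :
    (tripleSumCount Fᶜ Fᶜ Fᶜ s : ℤ)
      = #Fᶜ ^ 2 - #Fᶜ * #F + #F ^ 2 - tripleSumCount F F F s := by
  have h₁ := tripleSumCount_compl_add Fᶜ Fᶜ F s
  have h₂ := tripleSumCount_compl_add F Fᶜ F s
  have h₃ := tripleSumCount_compl_add F F F s
  rw [← tripleSumCount_rotate F] at h₁
  rw [tripleSumCount_rotate F F] at h₃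
  push_cast [← Nat.cast_inj (R := ℤ)] at h₁ h₂ h₃
  linear_combination h₁ - h₂ + h₃

theorem card_filter_compl_cube_sum_ne (F : Finset V) (s : V) :
    (#{p ∈ Fᶜ ×ˢ Fᶜ ×ˢ Fᶜ | p.1 + p.2.1 + p.2.2 ≠ s} : ℤ)
      = (Fintype.card V - #F) ^ 3 - (Fintype.card V - #F) ^ 2 + (Fintype.card V - #F) * #F
        - #F ^ 2 + tripleSumCount F F F s := by
  have h := card_filter_add_card_filter_not (s := Fᶜ ×ˢ Fᶜ ×ˢ Fᶜ)
    (fun p : V × V × V => p.1 + p.2.1 + p.2.2 = s)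
  rw [card_product, card_product] at h
  have h' := tripleSumCount_compl_compl_compl F s
  rw [tripleSumCount] at h'
  push_cast [← Nat.cast_inj (R := ℤ)] at h
  rw [card_compl, Nat.cast_sub (card_le_univ F)] at h h'
  linear_combination h - h'

theorem sum_sum_apply_card_zero_triple (φ : ℕ → ℤ) :
    ∑ a : V, ∑ b : V, φ #{0, a, b}
      = φ 1 + 3 * (Fintype.card V - 1) * φ 2
        + (Fintype.card V - 1) * (Fintype.card V - 2) * φ 3 := by
  -- `#{0, a, b}` is 3, 2 or 1 according as none, exactly one, or all of `a = 0`, `b = 0`,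
  -- `a = b` hold.
  have key : ∀ a b : V, φ #{0, a, b} = φ 3 + (φ 2 - φ 3) *
      ((if a = 0 then 1 else 0) + (if b = 0 then 1 else 0) + (if a = b then 1 else 0))
      + (φ 1 - 3 * φ 2 + 2 * φ 3) * (if a = 0 ∧ b = 0 then 1 else 0) := by
    intro a b
    rcases eq_or_ne a 0 with rfl | ha <;> rcases eq_or_ne b 0 with rfl | hb
    · simp only [mem_singleton, insert_eq_of_mem, card_singleton, ↓reduceIte, and_self]
      ring
    · simp [hb, hb.symm]
    · simp [ha, ha.symm]
    rcases eq_or_ne a b with rfl | hab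
    · simp [ha, ha.symm]
    · have hcard : #({0, a, b} : Finset V) = 3 := by
        rw [card_insert_of_notMem (by simp [ha.symm, hb.symm]), card_pair hab]
      simp [ha, hb, hab, hcard]
  simp only [key, sum_add_distrib, ← mul_sum]
  simp [ite_and]
  ring

theorem sum_sum_tripleSumCount_zero_triple :
    ∑ a : V, ∑ b : V, (tripleSumCount {0, a, b} {0, a, b} {0, a, b} (a + b) : ℤ)
      = 6 * Fintype.card V ^ 2 - 6 * Fintype.card V + 1 := by
  have key : ∀ a b : V, (tripleSumCount {0, a, b} {0, a, b} {0, a, b} (a + b) : ℤ)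
      = 6 - 3 * ((if a = 0 then 1 else 0) + (if b = 0 then 1 else 0) + (if a = b then 1 else 0))
        + (if a = 0 ∧ b = 0 then 1 else 0)
        + (if a + b = 0 then 1 else 0) + (if b = a + a then 1 else 0)
        + (if a = b + b then 1 else 0) := by
    intro a b
    rcases eq_or_ne a 0 with rfl | ha <;> rcases eq_or_ne b 0 with rfl | hb
    · simp [tripleSumCount_singleton_zero]
    · rw [insert_idem, zero_add, tripleSumCount_zero_pair b hb]
      simp [hb, hb.symm, eq_comm (a := (0 : V))]
    · rw [pair_comm, insert_idem, add_zero, tripleSumCount_zero_pair a ha]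
      simp [ha, eq_comm (a := (0 : V))]
    rcases eq_or_ne a b with rfl | hab
    · rw [pair_eq_singleton, tripleSumCount_zero_pair_add_self a ha]
      simp [ha]
    · simp [ha, hb, hab, tripleSumCount_zero_triple a b ha hb hab]
  have hswap : ∑ a : V, ∑ b : V, (if a = b + b then 1 else 0 : ℤ) = Fintype.card V := by
    rw [sum_comm]; simp
  simp only [key, sum_add_distrib, sum_sub_distrib, ← mul_sum, hswap]
  simp [ite_and, add_eq_zero_iff_eq_neg']
  ring

variable (V) in
def X : Set (V × V × V × V × V) :=
  {t | t.1 ≠ 0 ∧ t.1 ≠ t.2.2.2.1 ∧ t.1 ≠ t.2.2.2.2 ∧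
    t.2.1 ≠ 0 ∧ t.2.1 ≠ t.2.2.2.1 ∧ t.2.1 ≠ t.2.2.2.2 ∧
    t.2.2.1 ≠ 0 ∧ t.2.2.1 ≠ t.2.2.2.1 ∧ t.2.2.1 ≠ t.2.2.2.2 ∧
    t.1 + t.2.1 + t.2.2.1 ≠ t.2.2.2.1 + t.2.2.2.2}

theorem ncard_X_eq_sum_card_fiber :
    (X V).ncard = ∑ a : V, ∑ b : V, #{p ∈ ({0, a, b} : Finset V)ᶜ ×ˢ ({0, a, b} : Finset V)ᶜ ×ˢ
          ({0, a, b} : Finset V)ᶜ | p.1 + p.2.1 + p.2.2 ≠ a + b} := by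
  unfold X
  rw [Set.ncard_eq_toFinset_card', card_eq_sum_card_fiberwise (t := univ ×ˢ univ)
    (f := fun t => (t.2.2.2.1, t.2.2.2.2)) (fun _ _ => mem_product.2 ⟨mem_univ _, mem_univ _⟩),
    sum_product]
  refine sum_congr rfl fun a _ => sum_congr rfl fun b _ => ?_
  refine card_nbij' (fun t => (t.1, t.2.1, t.2.2.1)) (fun p => (p.1, p.2.1, p.2.2, a, b))
    ?_ ?_ ?_ (fun _ _ => rfl)
  · rintro ⟨x, y, z, c, d⟩ h
    simp only [coe_filter, Set.mem_toFinset, Set.mem_ofPred_eq, Prod.mk.injEq] at h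
    obtain ⟨h, rfl, rfl⟩ := h
    simp only [coe_filter, mem_product, mem_compl, mem_insert, mem_singleton, Set.mem_ofPred_eq]
    tauto
  · rintro ⟨x, y, z⟩ h
    simp only [coe_filter, mem_product, mem_compl, mem_insert, mem_singleton,
      Set.mem_ofPred_eq] at h
    simp only [coe_filter, Set.mem_toFinset, Set.mem_ofPred_eq]
    tauto
  · rintro ⟨x, y, z, c, d⟩ h
    simp only [coe_filter, Set.mem_toFinset, Set.mem_ofPred_eq, Prod.mk.injEq] at h
    obtain ⟨-, rfl, rfl⟩ := h
    rfl

omit [DecidableEq V] in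
theorem ncard_X :
    ((X V).ncard : ℤ) = (Fintype.card V - 1) * (Fintype.card V ^ 4 - 9 * Fintype.card V ^ 3
      + 36 * Fintype.card V ^ 2 - 69 * Fintype.card V + 51) := by
  classical
  set n : ℤ := (Fintype.card V : ℤ)
  rw [ncard_X_eq_sum_card_fiber]
  simp only [Nat.cast_sum, card_filter_compl_cube_sum_ne, sum_add_distrib,
    sum_sum_tripleSumCount_zero_triple]
  rw [sum_sum_apply_card_zero_triple (fun f => (n - f) ^ 3 - (n - f) ^ 2 + (n - f) * f - f ^ 2)]
  push_cast
  ring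

theorem card_Xk (k : ℕ) (hk : 2 ≤ k) :
    ({t : ZMod k × ZMod k × ZMod k × ZMod k × ZMod k |
        t.1 ≠ 0 ∧ t.1 ≠ t.2.2.2.1 ∧ t.1 ≠ t.2.2.2.2 ∧
        t.2.1 ≠ 0 ∧ t.2.1 ≠ t.2.2.2.1 ∧ t.2.1 ≠ t.2.2.2.2 ∧
        t.2.2.1 ≠ 0 ∧ t.2.2.1 ≠ t.2.2.2.1 ∧ t.2.2.1 ≠ t.2.2.2.2 ∧
        t.1 + t.2.1 + t.2.2.1 ≠ t.2.2.2.1 + t.2.2.2.2}.ncard : ℤ)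
      = ((k : ℤ) - 1) *
          ((k : ℤ) ^ 4 - 9 * (k : ℤ) ^ 3 + 36 * (k : ℤ) ^ 2 - 69 * (k : ℤ) + 51) := by
  have : NeZero k := ⟨by omega⟩
  have h := ncard_X (V := ZMod k)
  rw [ZMod.card] at h
  exact h
end
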